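/- arXiv:1301.5268 — 3 statements merged into one kernel-verified Lean document; each statement's English description precedes it below -/
import Mathlib

section
/- Let Γ ⊊ Z^d be (K,Q)-relatively dense. Then for t ≥ 2d - 1, the ground state energy satisfies E_Γ(-Δ, t) = inf σ(-Δ + t χ_Γ) ≥ (min{β(Γ),1})²/(6d - 1) ≥ 1/((6d-1) K_*^{2d}). -/
open scoped BigOperators

noncomputable section

/-- `ℤ^d`. -/
abbrev Zd (d : ℕ) := Fin d → ℤ

/-- `ℓ¹` distance on `ℤ^d`. -/
def dist1 {d : ℕ} (x y : Zd d) : ℕ := ∑ i, (x i - y i).natAbs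

/-- the `i`-th coordinate unit vector. -/
def unitVec {d : ℕ} (i : Fin d) : Zd d := fun j => if j = i then 1 else 0

/-- the negative discrete Laplacian: `(-Δφ)(x) = Σ_{‖x-y‖₁=1} (φ(x) - φ(y))`. -/
def negLap {d : ℕ} (φ : Zd d → ℝ) (x : Zd d) : ℝ :=
  ∑ i, ((φ x - φ (x + unitVec i)) + (φ x - φ (x - unitVec i)))

/-- characteristic function of a set. -/
def chi {d : ℕ} (A : Set (Zd d)) : Zd d → ℝ := A.indicator fun _ => 1

/-- edge boundary `∂A = {(x,y) ∈ A × Aᶜ : ‖x-y‖₁ = 1}`. -/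
def bdry {d : ℕ} (A : Set (Zd d)) : Set (Zd d × Zd d) :=
  {p | p.1 ∈ A ∧ p.2 ∉ A ∧ dist1 p.1 p.2 = 1}

/-- squared `ℓ²` norm (for finitely supported functions). -/
def norm2 {d : ℕ} (φ : Zd d → ℝ) : ℝ := ∑ᶠ x, φ x ^ 2

/-- quadratic form `⟨φ, (-Δ + V)φ⟩` (for finitely supported `φ`). -/
def energy {d : ℕ} (V : Zd d → ℝ) (φ : Zd d → ℝ) : ℝ :=
  ∑ᶠ x, φ x * (negLap φ x + V x * φ x)

/-- `V` is a bounded potential. -/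
def BddPot {d : ℕ} (V : Zd d → ℝ) : Prop := ∃ C, ∀ x, |V x| ≤ C

/-- the spread `spr(V) = sup V - inf V` of a bounded potential. -/
def spr {d : ℕ} (V : Zd d → ℝ) : ℝ := sSup (Set.range V) - sInf (Set.range V)

/-- `E_∅(H) = inf σ(-Δ + V)`, characterized variationally over normalized finitely
supported functions. -/
def E0 {d : ℕ} (V : Zd d → ℝ) : ℝ :=
  sInf {r | ∃ φ : Zd d → ℝ, (Function.support φ).Finite ∧ norm2 φ = 1 ∧ r = energy V φ}

/-- `E_Γ(H) = inf σ(H_Γ)`, the ground state energy of the `Γ`-trimmed operator,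
characterized variationally over normalized finitely supported functions vanishing on `Γ`. -/
def EG {d : ℕ} (V : Zd d → ℝ) (Γ : Set (Zd d)) : ℝ :=
  sInf {r | ∃ φ : Zd d → ℝ, (Function.support φ).Finite ∧ (∀ x ∈ Γ, φ x = 0) ∧
    norm2 φ = 1 ∧ r = energy V φ}

/-- `E_Γ(H,t) = inf σ(H + t χ_Γ)`. -/
def EGt {d : ℕ} (V : Zd d → ℝ) (Γ : Set (Zd d)) (t : ℝ) : ℝ :=
  E0 fun x => V x + t * chi Γ x

/-- the open box `Λ⁰_K(ζ) = {y : ‖y-ζ‖_∞ < K/2}`. -/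
def Lam0 {d : ℕ} (K : ℕ) (ζ : Zd d) : Set (Zd d) := {y | ∀ i, 2 * (y i - ζ i).natAbs < K}

/-- `Γ` is `(K,Q)`-relatively dense: `|Γ ∩ Λ⁰_K(ζ)| ≥ Q` for all `ζ ∈ KZ^d`. -/
def RelDense {d : ℕ} (Γ : Set (Zd d)) (K Q : ℕ) : Prop :=
  ∀ z : Zd d, Q ≤ (Γ ∩ Lam0 K fun i => (K : ℤ) * z i).ncard

/-- `K_* = K` if `K` is odd, `K+1` if `K` is even. -/
def Kstar (K : ℕ) : ℕ := if K % 2 = 1 then K else K + 1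

/-- `⟨χ_A, (-Δ)χ_A⟩` for a finite set `A`; for `A ⊆ Γᶜ` this coincides with
`⟨χ_A, (-Δ_Γ)χ_A⟩` for the `Γ`-trimmed Laplacian. -/
def qform {d : ℕ} (A : Finset (Zd d)) : ℝ := ∑ x ∈ A, negLap (chi ↑A) x

/-- Cheeger constant `β(Γ)` of the `Γ`-trimmed Laplacian. -/
def betaG {d : ℕ} (Γ : Set (Zd d)) : ℝ :=
  sInf {r | ∃ A : Finset (Zd d), A.Nonempty ∧ (↑A : Set (Zd d)) ⊆ Γᶜ ∧
    r = qform A / A.card}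

/-- `⟨χ_A, H(t)χ_A⟩ = ⟨χ_A, (-Δ)χ_A⟩ + t|A ∩ Γ|` for a finite set `A`. -/
def qformT {d : ℕ} (Γ : Set (Zd d)) (t : ℝ) (A : Finset (Zd d)) : ℝ :=
  qform A + t * ((↑A ∩ Γ : Set (Zd d)).ncard)

/-- Cheeger constant `β(t)` of `H(t) = -Δ + t χ_Γ`. -/
def betaT {d : ℕ} (Γ : Set (Zd d)) (t : ℝ) : ℝ :=
  sInf {r | ∃ A : Finset (Zd d), A.Nonempty ∧ r = qformT Γ t A / A.card}

/-- the box `Λ_L(x₀) = {y : ‖y-x₀‖_∞ ≤ L/2}`. -/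
def box {d : ℕ} (L : ℕ) (x₀ : Zd d) : Set (Zd d) := {y | ∀ i, 2 * (y i - x₀ i).natAbs ≤ L}

/-- `φ` is an eigenfunction of `H_Λ = (-Δ + V)_Λ` with eigenvalue `E`. -/
def eigOn {d : ℕ} (V : Zd d → ℝ) (Λ : Set (Zd d)) (φ : Zd d → ℝ) (E : ℝ) : Prop :=
  (∀ x ∉ Λ, φ x = 0) ∧ ∀ x ∈ Λ, negLap φ x + V x * φ x = E * φ x

/-- `E^Λ = inf σ(H_Λ)`, variationally. -/
def Ebox {d : ℕ} (V : Zd d → ℝ) (Λ : Set (Zd d)) : ℝ :=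
  sInf {r | ∃ φ : Zd d → ℝ, (∀ x ∉ Λ, φ x = 0) ∧ norm2 φ = 1 ∧ r = energy V φ}

/-!
Let `φ` be normalized and finitely supported, `D = ⟨φ, -Δφ⟩` and `s = Σ_{x ∈ Γ} φ(x)²`, so that
`⟨φ, (-Δ + tχ_Γ)φ⟩ = D + ts`. The mass `g = (1 - χ_Γ)φ²` vanishes on `Γ`; splitting it into
level sets, each of which is admissible for `β(Γ)`, gives the co-area bound
`β(Γ)(1 - s) ≤ ‖∇g‖₁`, and Cauchy–Schwarz gives `‖∇g‖₁ ≤ 2√(dD) + 2ds`. Eliminating `s` yields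
`min(β(Γ), 1)² / (6d - 1) ≤ D + (2d - 1)s ≤ D + ts`.

For `β(Γ) ≥ K^{-d}`, cut `ℤ^d` into tiles of side `K`, each containing a box `Λ⁰_K(Kζ)` and hence
a point of `Γ`. If `A ⊆ Γᶜ`, every tile meeting `A` contains an edge of `∂A`, so
`|A| ≤ K^d |∂A| = K^d ⟨χ_A, -Δχ_A⟩`.
-/

open Function Finset

namespace GroundState

variable {d : ℕ}

lemma chi_of_mem {A : Set (Zd d)} {x : Zd d} (h : x ∈ A) : chi A x = 1 :=
  Set.indicator_of_mem h _

lemma chi_of_notMem {A : Set (Zd d)} {x : Zd d} (h : x ∉ A) : chi A x = 0 :=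
  Set.indicator_of_notMem h _

lemma chi_nonneg (A : Set (Zd d)) (x : Zd d) : 0 ≤ chi A x :=
  Set.indicator_nonneg (fun _ _ => zero_le_one) x

lemma chi_le_one (A : Set (Zd d)) (x : Zd d) : chi A x ≤ 1 :=
  Set.indicator_le_self' (fun _ _ => zero_le_one) x

lemma hasFiniteSupport_chi (A : Finset (Zd d)) : HasFiniteSupport (chi (A : Set (Zd d))) :=
  A.finite_toSet.subset Set.support_indicator_subset

lemma finsum_comp_add_right (f : Zd d → ℝ) (c : Zd d) : ∑ᶠ x, f (x + c) = ∑ᶠ x, f x :=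
  finsum_comp_equiv (Equiv.addRight c)

/-- The Dirichlet form `⟨φ, -Δφ⟩`. -/
def dirichlet (φ : Zd d → ℝ) : ℝ := ∑ i, ∑ᶠ x, (φ x - φ (x + unitVec i)) ^ 2

/-- The `ℓ¹` norm `‖∇g‖₁` of the discrete gradient. -/
def variation (g : Zd d → ℝ) : ℝ := ∑ i, ∑ᶠ x, |g x - g (x + unitVec i)|

lemma dirichlet_nonneg (φ : Zd d → ℝ) : 0 ≤ dirichlet φ :=
  sum_nonneg fun _ _ => finsum_nonneg fun _ => sq_nonneg _

lemma finsum_mul_negLap {φ : Zd d → ℝ} (hφ : HasFiniteSupport φ) :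
    ∑ᶠ x, φ x * negLap φ x = dirichlet φ := by
  have hedge : ∀ i : Fin d, ∑ᶠ x, (φ x * (φ x - φ (x + unitVec i)) +
      φ x * (φ x - φ (x - unitVec i))) = ∑ᶠ x, (φ x - φ (x + unitVec i)) ^ 2 := fun i => by
    rw [finsum_add_distrib (by fun_prop) (by fun_prop),
      ← finsum_comp_add_right (fun x => φ x * (φ x - φ (x - unitVec i))) (unitVec i),
      ← finsum_add_distrib (by fun_prop) (by fun_prop (disch := simp [add_left_injective]))]
    exact finsum_congr fun x => by rw [add_sub_cancel_right]; ring
  simp only [negLap, mul_sum, mul_add]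
  rw [finsum_sum_comm _ _ fun i _ => by fun_prop]
  exact sum_congr rfl fun i _ => hedge i

lemma energy_eq_dirichlet_add (V : Zd d → ℝ) {φ : Zd d → ℝ} (hφ : HasFiniteSupport φ) :
    energy V φ = dirichlet φ + ∑ᶠ x, V x * φ x ^ 2 := by
  rw [← finsum_mul_negLap hφ, ← finsum_add_distrib (by fun_prop) (by fun_prop (disch := simp))]
  exact finsum_congr fun x => by ring

lemma qform_eq_dirichlet_chi (A : Finset (Zd d)) : qform A = dirichlet (chi (A : Set (Zd d))) := by
  rw [← finsum_mul_negLap (hasFiniteSupport_chi A), qform,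
    finsum_eq_sum_of_support_subset _ ((support_mul_subset_left _ _).trans
      Set.support_indicator_subset)]
  exact sum_congr rfl fun x hx => by rw [chi_of_mem (mem_coe.2 hx), one_mul]

lemma qform_nonneg (A : Finset (Zd d)) : 0 ≤ qform A :=
  qform_eq_dirichlet_chi A ▸ dirichlet_nonneg _

lemma betaG_nonneg (Γ : Set (Zd d)) : 0 ≤ betaG Γ :=
  Real.sInf_nonneg fun _ ⟨A, _, _, hr⟩ => hr ▸ div_nonneg (qform_nonneg A) (Nat.cast_nonneg _)

lemma betaG_mul_card_le_qform {Γ : Set (Zd d)} {A : Finset (Zd d)} (hA : A.Nonempty)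
    (hAΓ : (A : Set (Zd d)) ⊆ Γᶜ) : betaG Γ * A.card ≤ qform A := by
  have hle : betaG Γ ≤ qform A / A.card :=
    csInf_le ⟨0, fun _ ⟨B, _, _, hr⟩ => hr ▸ div_nonneg (qform_nonneg B) (Nat.cast_nonneg _)⟩
      ⟨A, hA, hAΓ, rfl⟩
  rwa [le_div_iff₀ (by exact_mod_cast hA.card_pos)] at hle

section Layer

variable {A : Finset (Zd d)} {g : Zd d → ℝ}

lemma abs_sub_eq_abs_sub_sub_layer_add {v : ℝ} (hv0 : 0 ≤ v) (hv : ∀ x ∈ A, v ≤ g x)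
    (hgA : ∀ x ∉ A, g x = 0) (x y : Zd d) :
    |g x - g y| = |(g x - v * chi A x) - (g y - v * chi A y)| +
      v * (chi A x - chi A y) ^ 2 := by
  by_cases hx : x ∈ A <;> by_cases hy : y ∈ A
  · simp [chi_of_mem, hx, hy]
  · have := hv x hx
    rw [chi_of_mem (mem_coe.2 hx), chi_of_notMem (mt mem_coe.1 hy), hgA y hy,
      abs_of_nonneg (by linarith), abs_of_nonneg (by linarith)]
    ring
  · have := hv y hy
    rw [chi_of_notMem (mt mem_coe.1 hx), chi_of_mem (mem_coe.2 hy), hgA x hx,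
      abs_of_nonpos (by linarith), abs_of_nonpos (by linarith)]
    ring
  · simp [chi_of_notMem, hx, hy, hgA]

lemma hasFiniteSupport_of_eq_zero_off (hgA : ∀ x ∉ A, g x = 0) : HasFiniteSupport g :=
  A.finite_toSet.subset fun x hx => by_contra fun h => hx (hgA x h)

lemma variation_eq_variation_sub_layer_add {v : ℝ} (hv0 : 0 ≤ v) (hv : ∀ x ∈ A, v ≤ g x)
    (hgA : ∀ x ∉ A, g x = 0) :
    variation g = variation (fun x => g x - v * chi A x) + v * qform A := by
  have hg := hasFiniteSupport_of_eq_zero_off hgA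
  have hχ := hasFiniteSupport_chi A
  rw [variation, variation, qform_eq_dirichlet_chi, dirichlet, mul_sum, ← sum_add_distrib]
  refine sum_congr rfl fun i _ => ?_
  rw [mul_finsum, ← finsum_add_distrib (by fun_prop (disch := simp [add_left_injective]))
    (by fun_prop (disch := simp [add_left_injective]))]
  exact finsum_congr fun x => abs_sub_eq_abs_sub_sub_layer_add hv0 hv hgA x _

lemma finsum_eq_finsum_sub_layer_add (v : ℝ) (hgA : ∀ x ∉ A, g x = 0) :
    ∑ᶠ x, g x = ∑ᶠ x, (g x - v * chi A x) + v * A.card := by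
  have hg := hasFiniteSupport_of_eq_zero_off hgA
  have hχ := hasFiniteSupport_chi A
  have hcard : ∑ᶠ x, chi (A : Set (Zd d)) x = A.card := by
    rw [finsum_eq_sum_of_support_subset (chi (A : Set (Zd d))) Set.support_indicator_subset,
      sum_congr rfl fun x hx => chi_of_mem (mem_coe.2 hx)]
    simp
  rw [finsum_sub_distrib hg (by fun_prop), ← mul_finsum, hcard]
  ring

end Layer

/-- Discrete co-area inequality: peel off `g` one level set `A` at a time, each contributing
`β(Γ) |A| ≤ ⟨χ_A, -Δχ_A⟩`. -/
theorem betaG_mul_finsum_le_variation {Γ : Set (Zd d)} {g : Zd d → ℝ} (hg : HasFiniteSupport g)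
    (hg0 : ∀ x, 0 ≤ g x) (hgΓ : ∀ x ∈ Γ, g x = 0) :
    betaG Γ * ∑ᶠ x, g x ≤ variation g := by
  classical
  suffices h : ∀ (S : Finset (Zd d)) (g : Zd d → ℝ), support g ⊆ S → (∀ x, 0 ≤ g x) →
      (∀ x ∈ Γ, g x = 0) → betaG Γ * ∑ᶠ x, g x ≤ variation g from
    h hg.toFinset g hg.coe_toFinset.symm.subset hg0 hgΓ
  intro S
  induction S using Finset.strongInduction with
  | H S ih =>
  intro g hgS hg0 hgΓ
  set A := S.filter (g · ≠ 0)
  rcases A.eq_empty_or_nonempty with hA | hA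
  · have hg : g = 0 := funext fun x => by_contra fun hx =>
      notMem_empty x (hA ▸ mem_filter.2 ⟨hgS hx, hx⟩)
    simp [hg, variation]
  obtain ⟨x₀, hx₀A, hx₀⟩ := exists_mem_eq_inf' hA g
  set v := A.inf' hA g
  have hv : ∀ x ∈ A, v ≤ g x := fun x hx => inf'_le g hx
  have hgA : ∀ x ∉ A, g x = 0 := fun x hx => by
    by_contra h
    exact hx (mem_filter.2 ⟨hgS h, h⟩)
  have hAΓ : (A : Set (Zd d)) ⊆ Γᶜ := fun x hx hxΓ => (mem_filter.1 hx).2 (hgΓ x hxΓ)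
  have hv0 : 0 ≤ v := hx₀ ▸ hg0 x₀
  set g' := fun x => g x - v * chi A x
  have hg'A : ∀ x ∉ A, g' x = 0 := fun x hx => by
    simp only [g', hgA x hx, chi_of_notMem (mt mem_coe.1 hx), mul_zero, sub_zero]
  have hg'S : support g' ⊆ A.erase x₀ := fun x hx => by
    refine mem_erase.2 ⟨fun h => hx ?_, by_contra fun h => hx (hg'A x h)⟩
    simp only [g', h, ← hx₀, chi_of_mem (mem_coe.2 hx₀A), mul_one, sub_self]
  have hg'0 : ∀ x, 0 ≤ g' x := fun x => by
    by_cases hx : x ∈ A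
    · simp only [g', chi_of_mem (mem_coe.2 hx), mul_one, sub_nonneg, hv x hx]
    · exact (hg'A x hx).ge
  have hg'Γ : ∀ x ∈ Γ, g' x = 0 := fun x hxΓ => hg'A x fun hx => hAΓ hx hxΓ
  have hIH := ih _ ((erase_ssubset hx₀A).trans_le (filter_subset _ S)) g' hg'S hg'0 hg'Γ
  calc betaG Γ * ∑ᶠ x, g x = betaG Γ * ∑ᶠ x, g' x + v * (betaG Γ * A.card) := by
        rw [finsum_eq_finsum_sub_layer_add v hgA]; ring
    _ ≤ variation g' + v * qform A :=
        add_le_add hIH (mul_le_mul_of_nonneg_left (betaG_mul_card_le_qform hA hAΓ) hv0)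
    _ = variation g := (variation_eq_variation_sub_layer_add hv0 hv hgA).symm

lemma finsum_mul_le_sqrt_mul_sqrt {α : Type*} {f g : α → ℝ} (hf : HasFiniteSupport f)
    (hg : HasFiniteSupport g) :
    ∑ᶠ x, f x * g x ≤ √(∑ᶠ x, f x ^ 2) * √(∑ᶠ x, g x ^ 2) := by
  set S := (hf.union hg).toFinset
  have hfS : support f ⊆ S := by simp [S]
  have hgS : support g ⊆ S := by simp [S]
  rw [finsum_eq_sum_of_support_subset _ ((support_mul_subset_left _ _).trans hfS),
    finsum_eq_sum_of_support_subset _ ((support_pow f two_ne_zero).trans_subset hfS),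
    finsum_eq_sum_of_support_subset _ ((support_pow g two_ne_zero).trans_subset hgS)]
  exact Real.sum_mul_le_sqrt_mul_sqrt S f g

lemma abs_sub_mass_le (a b p q : ℝ) (hp : 0 ≤ p) (hq : 0 ≤ q) :
    |(1 - p) * a ^ 2 - (1 - q) * b ^ 2| ≤ |a - b| * (|a| + |b|) + p * a ^ 2 + q * b ^ 2 := by
  calc |(1 - p) * a ^ 2 - (1 - q) * b ^ 2| = |(a - b) * (a + b) + -(p * a ^ 2) + q * b ^ 2| := by
        ring_nf
    _ ≤ |(a - b) * (a + b)| + |-(p * a ^ 2)| + |q * b ^ 2| := abs_add_three _ _ _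
    _ ≤ |a - b| * (|a| + |b|) + p * a ^ 2 + q * b ^ 2 := by
        rw [abs_neg, abs_mul, abs_of_nonneg (by positivity : 0 ≤ p * a ^ 2),
          abs_of_nonneg (by positivity : 0 ≤ q * b ^ 2)]
        gcongr
        exact abs_add_le a b

lemma finsum_abs_sub_mul_le {φ : Zd d → ℝ} (hφ : HasFiniteSupport φ) (hn : norm2 φ = 1)
    (c : Zd d) :
    ∑ᶠ x, |φ x - φ (x + c)| * (|φ x| + |φ (x + c)|) ≤ 2 * √(∑ᶠ x, (φ x - φ (x + c)) ^ 2) := by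
  have hmass : ∑ᶠ x, (|φ x| + |φ (x + c)|) ^ 2 ≤ 2 ^ 2 := by
    calc ∑ᶠ x, (|φ x| + |φ (x + c)|) ^ 2 ≤ ∑ᶠ x, 2 * (φ x ^ 2 + φ (x + c) ^ 2) :=
          finsum_le_finsum' (by fun_prop (disch := simp [add_left_injective]))
            (by fun_prop (disch := simp [add_left_injective])) fun x => by
            nlinarith [sq_abs (φ x), sq_abs (φ (x + c)), sq_nonneg (|φ x| - |φ (x + c)|)]
      _ = 2 ^ 2 := by
          rw [← mul_finsum, finsum_add_distrib (by fun_prop (disch := simp))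
            (by fun_prop (disch := simp [add_left_injective])),
            finsum_comp_add_right (fun x => φ x ^ 2), ← norm2, hn]
          norm_num
  calc ∑ᶠ x, |φ x - φ (x + c)| * (|φ x| + |φ (x + c)|)
      ≤ √(∑ᶠ x, |φ x - φ (x + c)| ^ 2) * √(∑ᶠ x, (|φ x| + |φ (x + c)|) ^ 2) :=
        finsum_mul_le_sqrt_mul_sqrt (by fun_prop (disch := simp [add_left_injective]))
          (by fun_prop (disch := simp [add_left_injective]))
    _ ≤ √(∑ᶠ x, (φ x - φ (x + c)) ^ 2) * 2 := by
        simp only [sq_abs]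
        gcongr
        exact Real.sqrt_le_left zero_le_two |>.2 hmass
    _ = 2 * √(∑ᶠ x, (φ x - φ (x + c)) ^ 2) := mul_comm _ _

theorem variation_mass_le {φ : Zd d → ℝ} (hφ : HasFiniteSupport φ) (hn : norm2 φ = 1)
    (Γ : Set (Zd d)) :
    variation (fun x => (1 - chi Γ x) * φ x ^ 2) ≤
      2 * √(d * dirichlet φ) + 2 * d * ∑ᶠ x, chi Γ x * φ x ^ 2 := by
  set s := ∑ᶠ x, chi Γ x * φ x ^ 2
  have hedge : ∀ i : Fin d, ∑ᶠ x, |(1 - chi Γ x) * φ x ^ 2 -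
      (1 - chi Γ (x + unitVec i)) * φ (x + unitVec i) ^ 2| ≤
        2 * √(∑ᶠ x, (φ x - φ (x + unitVec i)) ^ 2) + 2 * s := fun i => by
    calc _ ≤ ∑ᶠ x, (|φ x - φ (x + unitVec i)| * (|φ x| + |φ (x + unitVec i)|) +
            chi Γ x * φ x ^ 2 + chi Γ (x + unitVec i) * φ (x + unitVec i) ^ 2) :=
          finsum_le_finsum' (by fun_prop (disch := simp [add_left_injective]))
            (by fun_prop (disch := simp [add_left_injective])) fun x =>
            abs_sub_mass_le _ _ _ _ (chi_nonneg _ _) (chi_nonneg _ _)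
      _ = ∑ᶠ x, |φ x - φ (x + unitVec i)| * (|φ x| + |φ (x + unitVec i)|) + s + s := by
          rw [finsum_add_distrib (by fun_prop (disch := simp [add_left_injective]))
            (by fun_prop (disch := simp [add_left_injective])),
            finsum_add_distrib (by fun_prop (disch := simp [add_left_injective]))
            (by fun_prop (disch := simp)),
            finsum_comp_add_right (fun x => chi Γ x * φ x ^ 2)]
      _ ≤ 2 * √(∑ᶠ x, (φ x - φ (x + unitVec i)) ^ 2) + 2 * s := by
          linarith [finsum_abs_sub_mul_le hφ hn (unitVec i)]
  have hsqrt : ∑ i : Fin d, √(∑ᶠ x, (φ x - φ (x + unitVec i)) ^ 2) ≤ √(d * dirichlet φ) := by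
    simpa [dirichlet, mul_comm, Real.sqrt_mul (Nat.cast_nonneg d)] using
      Real.sum_sqrt_mul_sqrt_le univ (f := fun i => ∑ᶠ x, (φ x - φ (x + unitVec i)) ^ 2)
        (g := fun _ => 1) (fun _ => finsum_nonneg fun _ => sq_nonneg _) fun _ => zero_le_one
  calc variation _ ≤ ∑ i : Fin d, (2 * √(∑ᶠ x, (φ x - φ (x + unitVec i)) ^ 2) + 2 * s) :=
        sum_le_sum fun i _ => hedge i
    _ ≤ 2 * √(d * dirichlet φ) + 2 * d * s := by
        rw [sum_add_distrib, ← mul_sum, sum_const, card_univ, Fintype.card_fin, nsmul_eq_mul]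
        linarith

lemma sq_div_le_of_mul_one_sub_le (hd : 0 < d) {m D s : ℝ} (hm0 : 0 ≤ m) (hm1 : m ≤ 1)
    (hD : 0 ≤ D) (hs : 0 ≤ s) (h : m * (1 - s) ≤ 2 * √(d * D) + 2 * d * s) :
    m ^ 2 / (6 * d - 1) ≤ D + (2 * d - 1) * s := by
  have hd1 : (1 : ℝ) ≤ d := by exact_mod_cast hd
  rw [div_le_iff₀ (by linarith)]
  -- If `a s ≥ m` the potential term alone suffices; otherwise square `m - a s ≤ 2√(dD)`.
  set a : ℝ := m + 2 * d with ha
  by_cases hcase : m ≤ a * s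
  · have hma : m * a ≤ 2 * d + 1 := by nlinarith
    have hd6 : 2 * (d : ℝ) + 1 ≤ (2 * d - 1) * (6 * d - 1) := by nlinarith
    nlinarith [mul_le_mul_of_nonneg_left hcase hm0, mul_nonneg hD (by linarith : (0:ℝ) ≤ 6 * d - 1)]
  push Not at hcase
  have hsq : (m - a * s) ^ 2 ≤ 4 * (d * D) := by
    have h2 : (2 * √(d * D)) ^ 2 = 4 * (d * D) := by
      rw [mul_pow, Real.sq_sqrt (by positivity)]; ring
    nlinarith [Real.sqrt_nonneg (d * D)]
  rcases Nat.lt_or_ge d 2 with hd2 | hd2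
  · obtain rfl : d = 1 := by omega
    simp only [Nat.cast_one, mul_one] at hsq ha ⊢
    have ham : a * m ≤ 3 := by nlinarith
    nlinarith [sq_nonneg (4 * m - 9 * (a * s)), mul_nonneg hs (by nlinarith : (0:ℝ) ≤ 3 - a * m),
      mul_nonneg (by positivity : 0 ≤ a * s) (by linarith : 0 ≤ m - a * s),
      mul_nonneg hs (by linarith : 0 ≤ m - a * s), sq_nonneg (m - a * s)]
  · have hd2' : (2 : ℝ) ≤ d := by exact_mod_cast hd2
    have ham : a * m ≤ 2 * d * (2 * d - 1) := by nlinarith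
    nlinarith [mul_nonneg hs (by nlinarith : (0:ℝ) ≤ 2 * d * (2 * d - 1) - a * m),
      sq_nonneg (a * s), mul_nonneg (mul_nonneg hs hs) (by linarith : (0:ℝ) ≤ 6 * d - 1)]

theorem min_betaG_sq_div_le_energy (hd : 0 < d) (Γ : Set (Zd d)) {t : ℝ} (ht : 2 * d - 1 ≤ t)
    {φ : Zd d → ℝ} (hφ : HasFiniteSupport φ) (hn : norm2 φ = 1) :
    min (betaG Γ) 1 ^ 2 / (6 * d - 1) ≤ energy (fun x => t * chi Γ x) φ := by
  set m := min (betaG Γ) 1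
  set s := ∑ᶠ x, chi Γ x * φ x ^ 2
  have hs : 0 ≤ s := finsum_nonneg fun x => mul_nonneg (chi_nonneg Γ x) (sq_nonneg _)
  have henergy : energy (fun x => t * chi Γ x) φ = dirichlet φ + t * s := by
    rw [energy_eq_dirichlet_add _ hφ, mul_finsum]
    simp only [mul_assoc]
  have hmass : ∑ᶠ x, (1 - chi Γ x) * φ x ^ 2 = 1 - s := by
    simp only [one_sub_mul]
    rw [finsum_sub_distrib (by fun_prop (disch := simp)) (by fun_prop (disch := simp)), ← norm2, hn]
  have hmass0 : ∀ x, 0 ≤ (1 - chi Γ x) * φ x ^ 2 := fun x =>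
    mul_nonneg (sub_nonneg.2 (chi_le_one Γ x)) (sq_nonneg _)
  have hcoarea : m * (1 - s) ≤ 2 * √(d * dirichlet φ) + 2 * d * s :=
    calc m * (1 - s) ≤ betaG Γ * (1 - s) :=
          mul_le_mul_of_nonneg_right (min_le_left _ _) (hmass ▸ finsum_nonneg hmass0)
      _ ≤ variation (fun x => (1 - chi Γ x) * φ x ^ 2) :=
          hmass ▸ betaG_mul_finsum_le_variation (by fun_prop (disch := simp)) hmass0
            fun x hx => by rw [chi_of_mem hx, sub_self, zero_mul]
      _ ≤ _ := variation_mass_le hφ hn Γ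
  have hm := sq_div_le_of_mul_one_sub_le hd (le_min (betaG_nonneg Γ) zero_le_one)
    (min_le_right _ _) (dirichlet_nonneg φ) hs hcoarea
  rw [henergy]
  linarith [mul_le_mul_of_nonneg_right ht hs]

theorem min_betaG_sq_div_le_EGt (hd : 0 < d) (Γ : Set (Zd d)) {t : ℝ} (ht : 2 * d - 1 ≤ t) :
    min (betaG Γ) 1 ^ 2 / (6 * d - 1) ≤ EGt (fun _ => 0) Γ t := by
  refine le_csInf ⟨_, Pi.single 0 1, (Set.finite_singleton 0).subset Pi.support_single_subset,
    ?_, rfl⟩ ?_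
  · rw [norm2, finsum_eq_single _ 0 fun x hx => by simp [hx]]
    simp
  · rintro r ⟨φ, hφ, hn, rfl⟩
    simpa only [zero_add] using min_betaG_sq_div_le_energy hd Γ ht hφ hn

def step (i : Fin d) (b : Bool) : Zd d := if b then unitVec i else -unitVec i

lemma add_step_apply (x : Zd d) (i : Fin d) (b : Bool) (j : Fin d) :
    (x + step i b) j = if j = i then (if b then x j + 1 else x j - 1) else x j := by
  cases b <;> by_cases h : j = i <;> simp [step, unitVec, h, sub_eq_add_neg]

/-- The edge boundary `∂A`, the edge `(x, x ± eᵢ)` being encoded as `(x, i, ±)`. -/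
def outerEdges (A : Finset (Zd d)) : Finset (Zd d × Fin d × Bool) :=
  (A ×ˢ univ).filter fun p => p.1 + step p.2.1 p.2.2 ∉ A

lemma qform_eq_card_outerEdges (A : Finset (Zd d)) : qform A = #(outerEdges A) := by
  rw [outerEdges, card_filter, Nat.cast_sum, sum_product, qform]
  refine sum_congr rfl fun x hx => ?_
  rw [negLap, ← univ_product_univ, sum_product]
  refine sum_congr rfl fun i _ => ?_
  rw [Fintype.sum_bool, chi_of_mem (mem_coe.2 hx)]
  by_cases h₁ : x + unitVec i ∈ A <;> by_cases h₂ : x - unitVec i ∈ A <;>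
    simp [step, chi_of_mem, chi_of_notMem, h₁, h₂, ← sub_eq_add_neg]

lemma exists_step_closer {x γ : Zd d} (h : x ≠ γ) :
    ∃ i b, dist1 (x + step i b) γ < dist1 x γ ∧
      ∀ j, min (x j) (γ j) ≤ (x + step i b) j ∧ (x + step i b) j ≤ max (x j) (γ j) := by
  classical
  obtain ⟨i, hi⟩ : ∃ i, x i ≠ γ i := by simpa [funext_iff] using h
  refine ⟨i, decide (x i < γ i), ?_, fun j => ?_⟩
  · rw [dist1, dist1, ← add_sum_erase _ _ (mem_univ i), ← add_sum_erase _ _ (mem_univ i),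
      sum_congr rfl fun j hj => by rw [add_step_apply, if_neg (ne_of_mem_erase hj)]]
    rw [add_step_apply, if_pos rfl, add_lt_add_iff_right]
    by_cases hlt : x i < γ i <;> simp [hlt] <;> omega
  · rw [add_step_apply]
    by_cases hj : j = i
    · subst hj
      by_cases hlt : x j < γ j
      · simp [hlt]
      · simp [hlt]; omega
    · simp [hj]

section Tiling

variable {K : ℕ}

/-- The index `z` of the tile `{y | ∀ i, K zᵢ - ⌊K/2⌋ ≤ yᵢ < K zᵢ - ⌊K/2⌋ + K}` containing `y`.
These tiles partition `ℤ^d`, and the tile of `z` contains `Λ⁰_K(Kz)`. -/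
def tile (K : ℕ) (y : Zd d) : Zd d := fun i => (y i + (K / 2 : ℕ)) / K

lemma tile_eq_iff (hK : 0 < K) {y z : Zd d} :
    tile K y = z ↔ ∀ i, K * z i ≤ y i + (K / 2 : ℕ) ∧ y i + (K / 2 : ℕ) < K * z i + K := by
  simp only [funext_iff, tile, Int.ediv_eq_iff_of_pos (Int.natCast_pos.2 hK), mul_comm (K : ℤ)]

lemma tile_eq_of_mem_Lam0 (hK : 0 < K) {z γ : Zd d} (hγ : γ ∈ Lam0 K fun i => (K : ℤ) * z i) :
    tile K γ = z := by
  refine (tile_eq_iff hK).2 fun i => ?_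
  have h : 2 * (γ i - K * z i).natAbs < K := hγ i
  rcases Int.natAbs_eq (γ i - K * z i) with h' | h' <;> omega

lemma card_filter_tile_le (hK : 0 < K) (A : Finset (Zd d)) (z : Zd d) :
    #(A.filter (tile K · = z)) ≤ K ^ d := by
  calc #(A.filter (tile K · = z))
      ≤ #(Fintype.piFinset fun i => Ico (K * z i - (K / 2 : ℕ)) (K * z i - (K / 2 : ℕ) + K)) := by
        refine card_le_card fun y hy => Fintype.mem_piFinset.2 fun i => ?_
        have := (tile_eq_iff hK).1 (mem_filter.1 hy).2 i
        exact mem_Ico.2 ⟨by omega, by omega⟩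
    _ = K ^ d := by simp [Fintype.card_piFinset, Int.card_Ico]

lemma tile_eq_of_between (hK : 0 < K) {x γ y z : Zd d} (hx : tile K x = z)
    (hγ : tile K γ = z) (hy : ∀ j, min (x j) (γ j) ≤ y j ∧ y j ≤ max (x j) (γ j)) :
    tile K y = z := by
  refine (tile_eq_iff hK).2 fun j => ?_
  have := (tile_eq_iff hK).1 hx j
  have := (tile_eq_iff hK).1 hγ j
  have := hy j
  omega

lemma exists_outerEdges_tile_eq (hK : 0 < K) {A : Finset (Zd d)} {x γ : Zd d}
    (hx : x ∈ A) (hγ : γ ∉ A) (hxγ : tile K x = tile K γ) :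
    ∃ p ∈ outerEdges A, tile K p.1 = tile K γ := by
  induction hn : dist1 x γ using Nat.strong_induction_on generalizing x with
  | _ n ih =>
  obtain ⟨i, b, hcloser, hbetween⟩ := exists_step_closer (ne_of_mem_of_not_mem hx hγ)
  by_cases hx' : x + step i b ∈ A
  · exact ih _ (hn ▸ hcloser) hx' (tile_eq_of_between hK hxγ rfl hbetween) rfl
  · exact ⟨(x, i, b), mem_filter.2 ⟨mem_product.2 ⟨hx, mem_univ _⟩, hx'⟩, hxγ⟩

lemma card_le_pow_mul_qform {Q : ℕ} {Γ : Set (Zd d)} (hK : 0 < K) (hQ : 0 < Q)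
    (hΓ : RelDense Γ K Q) {A : Finset (Zd d)} (hAΓ : (A : Set (Zd d)) ⊆ Γᶜ) :
    (#A : ℝ) ≤ K ^ d * qform A := by
  classical
  have hcover : Set.SurjOn (fun p : Zd d × Fin d × Bool => tile K p.1) (outerEdges A)
      (A.image (tile K)) := fun z hz => by
    obtain ⟨x, hx, rfl⟩ := mem_image.1 (mem_coe.1 hz)
    obtain ⟨γ, hγΓ, hγL⟩ : (Γ ∩ Lam0 K fun i => (K : ℤ) * tile K x i).Nonempty :=
      Set.nonempty_of_ncard_ne_zero (by have := hΓ (tile K x); omega)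
    have hγ := tile_eq_of_mem_Lam0 hK hγL
    obtain ⟨p, hp, hpγ⟩ :=
      exists_outerEdges_tile_eq hK hx (fun h => hAΓ (mem_coe.2 h) hγΓ) hγ.symm
    exact ⟨p, hp, hpγ.trans hγ⟩
  have hcard : #A ≤ K ^ d * #(outerEdges A) :=
    (card_le_mul_card_image A _ fun z _ => card_filter_tile_le hK A z).trans
      (Nat.mul_le_mul_left _ (card_le_card_of_surjOn _ hcover))
  rw [qform_eq_card_outerEdges]
  exact_mod_cast hcard

lemma one_div_pow_le_betaG {Q : ℕ} {Γ : Set (Zd d)} (hK : 0 < K) (hQ : 0 < Q)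
    (hΓ : RelDense Γ K Q) (hne : Γ ≠ Set.univ) : 1 / (K : ℝ) ^ d ≤ betaG Γ := by
  obtain ⟨x, hx⟩ := (Set.ne_univ_iff_exists_notMem Γ).1 hne
  refine le_csInf ⟨_, {x}, singleton_nonempty x, by simpa using hx, rfl⟩ ?_
  rintro r ⟨A, hA, hAΓ, rfl⟩
  rw [div_le_div_iff₀ (by positivity) (by exact_mod_cast hA.card_pos), one_mul, mul_comm]
  exact card_le_pow_mul_qform hK hQ hΓ hAΓ

end Tiling

lemma le_Kstar (K : ℕ) : K ≤ Kstar K := by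
  unfold Kstar; split <;> omega

end GroundState

open GroundState

/-- for `t ≥ 2d - 1`,
`E_Γ(-Δ,t) ≥ (min{β(Γ),1})²/(6d-1) ≥ 1/((6d-1) K_*^{2d})`. -/
theorem stmt16 (d K Q : ℕ) (hd : 0 < d) (hK : 0 < K) (hQ : 0 < Q)
    (Γ : Set (Zd d)) (hne : Γ ≠ Set.univ) (hΓ : RelDense Γ K Q) :
    ∀ t : ℝ, 2 * d - 1 ≤ t →
      min (betaG Γ) 1 ^ 2 / (6 * d - 1) ≤ EGt (fun _ => 0) Γ t ∧
      1 / ((6 * (d : ℝ) - 1) * (Kstar K : ℝ) ^ (2 * d)) ≤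
        min (betaG Γ) 1 ^ 2 / (6 * d - 1) := by
  intro t ht
  refine ⟨min_betaG_sq_div_le_EGt hd Γ ht, ?_⟩
  have hK₀ : (0 : ℝ) < K := by exact_mod_cast hK
  have hKs : (K : ℝ) ≤ Kstar K := by exact_mod_cast le_Kstar K
  have hm : 1 / (Kstar K : ℝ) ^ d ≤ min (betaG Γ) 1 :=
    le_min ((one_div_le_one_div_of_le (by positivity) (pow_le_pow_left₀ hK₀.le hKs d)).trans
        (one_div_pow_le_betaG hK hQ hΓ hne))
      (div_le_one_of_le₀ (one_le_pow₀ (by linarith [(Nat.one_le_cast (α := ℝ)).2 hK]))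
        (by positivity))
  have h6 : (0 : ℝ) < 6 * d - 1 := by linarith [(Nat.one_le_cast (α := ℝ)).2 hd]
  calc 1 / ((6 * (d : ℝ) - 1) * (Kstar K : ℝ) ^ (2 * d))
      = (1 / (Kstar K : ℝ) ^ d) ^ 2 / (6 * d - 1) := by
        rw [pow_mul', div_pow, one_pow, div_div, mul_comm]
    _ ≤ min (betaG Γ) 1 ^ 2 / (6 * d - 1) := by gcongr
end
end

section
/- For a real-valued finitely supported function φ on Z^d with ‖φ‖₂ = 1 and H(t) = -Δ + tχ_Γ: Σ_{x,y ∈ Ẑ^d} κ(x,y)|φ̂(x)² - φ̂(y)²| ≥ 2 β(t), where κ is the edge weight function of the graph Ẑ^d = Z^d ∪ {∞} with κ(x,y)=1 for ‖x-y‖₁=1 in Z^d, κ(x,∞)=κ(∞,x)=tχ_Γ(x), κ(∞,∞)=0, φ̂ extends φ by φ̂(∞)=0, and β(t) = inf over nonempty finite A ⊂ Z^d of ⟨χ_A, H(t)χ_A⟩/|A|. (Co-area formula step in Cheeger's inequality.) -/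
open scoped BigOperators

noncomputable section

/-- extension of `φ` to `Ẑ^d = ℤ^d ∪ {∞}` by `φ̂(∞) = 0`. -/
def hatphi {d : ℕ} (φ : Zd d → ℝ) : Option (Zd d) → ℝ := fun o => o.elim 0 φ

/-- edge weights of the augmented graph `Ẑ^d = ℤ^d ∪ {∞}`. -/
def kap {d : ℕ} (Γ : Set (Zd d)) (t : ℝ) : Option (Zd d) → Option (Zd d) → ℝ
  | some x, some y => if dist1 x y = 1 then 1 else 0
  | some x, none => t * chi Γ x
  | none, some y => t * chi Γ y
  | none, none => 0


open Classical in
/-- predecessor of `s` in `vals` (largest element below `s`), or `0`. -/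
noncomputable def predv (vals : Finset ℝ) (s : ℝ) : ℝ :=
  if h : (vals.filter (fun u => u < s)).Nonempty then (vals.filter (fun u => u < s)).max' h
  else 0

lemma predv_spec {vals : Finset ℝ} (h0 : (0:ℝ) ∈ vals) {s : ℝ} (hs : 0 < s) :
    predv vals s ∈ vals ∧ predv vals s < s ∧ 0 ≤ predv vals s ∧
      ∀ u ∈ vals, u < s → u ≤ predv vals s := by
  classical
  have hne : (vals.filter (fun u => u < s)).Nonempty := ⟨0, by simp [h0, hs]⟩
  have hdef : predv vals s = (vals.filter (fun u => u < s)).max' hne := by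
    rw [predv, dif_pos]
  have hmem := (vals.filter (fun u => u < s)).max'_mem hne
  rw [Finset.mem_filter] at hmem
  refine ⟨by rw [hdef]; exact hmem.1, by rw [hdef]; exact hmem.2, ?_, ?_⟩
  · rw [hdef]; exact Finset.le_max' _ 0 (by simp [h0, hs])
  · intro u hu hus; rw [hdef]; exact Finset.le_max' _ u (by simp [hu, hus])

lemma telescope_aux (vals : Finset ℝ) (h0 : (0:ℝ) ∈ vals) :
    ∀ n : ℕ, ∀ a b : ℝ, a ∈ vals → b ∈ vals → 0 ≤ b → b ≤ a →
      (vals.filter (fun s => b < s ∧ s ≤ a)).card = n →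
      ∑ s ∈ vals.filter (fun s => b < s ∧ s ≤ a), (s - predv vals s) = a - b := by
  classical
  intro n
  induction n with
  | zero =>
    intro a b ha hb hb0 hba hcard
    have hempty : vals.filter (fun s => b < s ∧ s ≤ a) = ∅ := Finset.card_eq_zero.mp hcard
    have hab : a = b := by
      by_contra hne
      have hba' : b < a := lt_of_le_of_ne hba (Ne.symm hne)
      have : a ∈ vals.filter (fun s => b < s ∧ s ≤ a) := by simp [ha, hba']
      rw [hempty] at this; simp at this
    rw [hempty]; simp [hab]
  | succ n ih =>
    intro a b ha hb hb0 hba hcard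
    have hba' : b < a := by
      rcases lt_or_eq_of_le hba with h | h
      · exact h
      · exfalso
        have : vals.filter (fun s => b < s ∧ s ≤ a) = ∅ := by
          apply Finset.filter_false_of_mem
          intro s _hs ⟨h1, h2⟩
          exact absurd (h2.trans_lt (h ▸ h1)).false (by simp)
        rw [this] at hcard; simp at hcard
    have haf : a ∈ vals.filter (fun s => b < s ∧ s ≤ a) := by simp [ha, hba']
    have ha0 : (0:ℝ) < a := lt_of_le_of_lt hb0 hba'
    obtain ⟨hcv, hclt, hc0, hcmax⟩ := predv_spec h0 ha0
    set c := predv vals a with hc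
    have hbc : b ≤ c := hcmax b hb hba'
    -- erase a from the filter
    have hfe : vals.filter (fun s => b < s ∧ s ≤ c) =
        (vals.filter (fun s => b < s ∧ s ≤ a)).erase a := by
      ext s
      simp only [Finset.mem_erase, Finset.mem_filter]
      constructor
      · rintro ⟨hs, h1, h2⟩
        exact ⟨by rintro rfl; exact absurd h2 (not_le.mpr hclt), hs, h1, h2.trans hclt.le⟩
      · rintro ⟨hne, hs, h1, h2⟩
        exact ⟨hs, h1, hcmax s hs (lt_of_le_of_ne h2 hne)⟩
    have hcard' : (vals.filter (fun s => b < s ∧ s ≤ c)).card = n := by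
      rw [hfe, Finset.card_erase_of_mem haf, hcard]; rfl
    have hsum := ih c b hcv hb hb0 hbc hcard'
    rw [hfe] at hsum
    have := Finset.add_sum_erase _ (fun s => s - predv vals s) haf
    rw [← this, hsum]
    show a - predv vals a + (c - b) = a - b
    rw [← hc]; ring

-- MORE HELPERS

lemma unitVec_apply {d : ℕ} (i j : Fin d) : unitVec i j = if j = i then 1 else 0 := rfl

lemma dist1_self_add {d : ℕ} (x : Zd d) (i : Fin d) : dist1 x (x + unitVec i) = 1 := by
  unfold dist1
  have : ∀ j, (x j - (x + unitVec i) j).natAbs = if j = i then 1 else 0 := by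
    intro j
    show (x j - (x j + unitVec i j)).natAbs = _
    rcases eq_or_ne j i with h | h <;> simp [unitVec_apply, h]
  simp only [this]
  simp

lemma dist1_self_sub {d : ℕ} (x : Zd d) (i : Fin d) : dist1 x (x - unitVec i) = 1 := by
  unfold dist1
  have : ∀ j, (x j - (x - unitVec i) j).natAbs = if j = i then 1 else 0 := by
    intro j
    show (x j - (x j - unitVec i j)).natAbs = _
    rcases eq_or_ne j i with h | h <;> simp [unitVec_apply, h]
  simp only [this]
  simp

lemma dist1_symm {d : ℕ} (x y : Zd d) : dist1 x y = dist1 y x := by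
  unfold dist1
  refine Finset.sum_congr rfl fun i _ => ?_
  omega

lemma add_unitVec_inj {d : ℕ} (x : Zd d) {i j : Fin d}
    (h : x + unitVec i = x + unitVec j) : i = j := by
  have := congrFun h i
  simp only [Pi.add_apply, unitVec_apply, add_right_inj] at this
  by_contra hne
  simp [if_neg hne, (Ne.symm hne)] at this

lemma sub_unitVec_inj {d : ℕ} (x : Zd d) {i j : Fin d}
    (h : x - unitVec i = x - unitVec j) : i = j := by
  have := congrFun h i
  simp only [Pi.sub_apply, unitVec_apply, sub_right_inj] at this
  by_contra hne
  simp [if_neg hne, Ne.symm hne] at this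

lemma add_unitVec_ne_sub {d : ℕ} (x : Zd d) (i j : Fin d) :
    x + unitVec i ≠ x - unitVec j := by
  intro h
  have := congrFun h i
  simp only [Pi.add_apply, Pi.sub_apply, unitVec_apply, if_pos rfl] at this
  rcases eq_or_ne i j with h' | h' <;> simp [h'] at this <;> omega

lemma eq_add_or_sub_of_dist1 {d : ℕ} {x y : Zd d} (h : dist1 x y = 1) :
    ∃ i, y = x + unitVec i ∨ y = x - unitVec i := by
  unfold dist1 at h
  have hex : ∃ i ∈ Finset.univ, (x i - y i).natAbs ≠ 0 := by
    by_contra hc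
    push_neg at hc
    rw [Finset.sum_eq_zero fun i hi => (hc i hi)] at h
    omega
  obtain ⟨i, _, hi⟩ := hex
  have hle : (x i - y i).natAbs ≤ 1 := by
    rw [← h]
    exact Finset.single_le_sum (f := fun k => (x k - y k).natAbs)
      (fun j _ => Nat.zero_le _) (Finset.mem_univ i)
  have hione : (x i - y i).natAbs = 1 := by omega
  have hrest : ∀ j, j ≠ i → x j = y j := by
    intro j hj
    have hsplit := Finset.add_sum_erase Finset.univ (fun k => (x k - y k).natAbs)
      (Finset.mem_univ i)
    simp only [← hsplit] at h
    rw [hione] at h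
    have hzero : ∑ k ∈ Finset.univ.erase i, (x k - y k).natAbs = 0 := by omega
    have := (Finset.sum_eq_zero_iff).mp hzero j (by simp [hj])
    omega
  rcases Int.natAbs_eq_iff.mp hione with hpm | hpm
  · -- x i - y i = 1, y = x - e_i
    refine ⟨i, Or.inr ?_⟩
    funext j
    rcases eq_or_ne j i with rfl | hj
    · show y j = x j - unitVec j j
      simp [unitVec_apply]; omega
    · show y j = x j - unitVec i j
      rw [hrest j hj]; simp [unitVec_apply, hj]
  · refine ⟨i, Or.inl ?_⟩
    funext j
    rcases eq_or_ne j i with rfl | hj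
    · show y j = x j + unitVec j j
      simp [unitVec_apply]; omega
    · show y j = x j + unitVec i j
      rw [hrest j hj]; simp [unitVec_apply, hj]



open Classical in
lemma chi_apply {d : ℕ} (A : Set (Zd d)) (x : Zd d) :
    chi A x = if x ∈ A then 1 else 0 := by
  simp [chi, Set.indicator_apply]

open Classical in
lemma qform_eq {d : ℕ} (A : Finset (Zd d)) :
    qform A = ∑ x ∈ A, ∑ i,
      ((if x + unitVec i ∈ A then (0:ℝ) else 1) + (if x - unitVec i ∈ A then (0:ℝ) else 1)) := by
  classical
  unfold qform negLap
  refine Finset.sum_congr rfl fun x hx => Finset.sum_congr rfl fun i _ => ?_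
  have h2 : ∀ y, chi (↑A : Set (Zd d)) y = if y ∈ A then 1 else 0 := fun y => by
    rw [chi_apply]; simp
  rw [h2, h2, h2, if_pos hx]
  by_cases ha : x + unitVec i ∈ A <;> by_cases hb : x - unitVec i ∈ A <;> simp [ha, hb]

lemma qform_nonneg {d : ℕ} (A : Finset (Zd d)) : 0 ≤ qform A := by
  classical
  rw [qform_eq]
  refine Finset.sum_nonneg fun x _ => Finset.sum_nonneg fun i _ => ?_
  positivity

open Classical in
lemma ncard_inter {d : ℕ} (A : Finset (Zd d)) (Γ : Set (Zd d)) :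
    ((↑A ∩ Γ : Set (Zd d))).ncard = (A.filter (· ∈ Γ)).card := by
  classical
  have : (↑A ∩ Γ : Set (Zd d)) = ↑(A.filter (· ∈ Γ)) := by
    ext x; simp [Set.mem_inter_iff]
  rw [this, Set.ncard_coe_finset]

lemma qformT_nonneg {d : ℕ} (Γ : Set (Zd d)) {t : ℝ} (ht : 0 ≤ t) (A : Finset (Zd d)) :
    0 ≤ qformT Γ t A := by
  unfold qformT
  have := qform_nonneg A
  have h2 : (0:ℝ) ≤ t * ((↑A ∩ Γ : Set (Zd d)).ncard : ℝ) := by positivity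
  linarith

lemma betaT_le {d : ℕ} (Γ : Set (Zd d)) {t : ℝ} (ht : 0 ≤ t) (A : Finset (Zd d))
    (hA : A.Nonempty) : betaT Γ t ≤ qformT Γ t A / A.card := by
  apply csInf_le
  · refine ⟨0, ?_⟩
    rintro r ⟨A', _, rfl⟩
    exact div_nonneg (qformT_nonneg Γ ht A') (Nat.cast_nonneg _)
  · exact ⟨A, hA, rfl⟩

lemma chi_nonneg {d : ℕ} (A : Set (Zd d)) (x : Zd d) : 0 ≤ chi A x := by
  classical
  rw [chi_apply]; split <;> norm_num

lemma abs_eq_max_add_max (a b : ℝ) : |a - b| = max (a - b) 0 + max (b - a) 0 := by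
  rcases le_total a b with h | h
  · rw [abs_of_nonpos (by linarith), max_eq_right (by linarith), max_eq_left (by linarith)]
    ring
  · rw [abs_of_nonneg (by linarith), max_eq_left (by linarith), max_eq_right (by linarith)]
    ring


/-- co-area step: for finitely supported real `φ` with `‖φ‖₂ = 1`,
`Σ_{x,y ∈ Ẑ^d} κ(x,y)|φ̂(x)² - φ̂(y)²| ≥ 2 β(t)`. -/
theorem stmt17 (d : ℕ) (hd : 0 < d) (Γ : Set (Zd d)) (t : ℝ) (ht : 0 ≤ t)
    (φ : Zd d → ℝ) (hfin : (Function.support φ).Finite) (hnorm : norm2 φ = 1) :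
    2 * betaT Γ t ≤
      ∑ᶠ p : Option (Zd d) × Option (Zd d),
        kap Γ t p.1 p.2 * |hatphi φ p.1 ^ 2 - hatphi φ p.2 ^ 2| := by
  classical
  set F := hfin.toFinset with hF
  have hmemF : ∀ x, x ∈ F ↔ φ x ≠ 0 := fun x => hfin.mem_toFinset
  -- B: F together with all its neighbors
  set B : Finset (Zd d) := F ∪ Finset.univ.biUnion (fun i : Fin d =>
      F.image (fun x => x + unitVec i) ∪ F.image (fun x => x - unitVec i)) with hB
  have hFB : F ⊆ B := Finset.subset_union_left
  have hnbB : ∀ x ∈ F, ∀ i : Fin d, x + unitVec i ∈ B ∧ x - unitVec i ∈ B := by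
    intro x hx i
    constructor <;>
    · apply Finset.mem_union_right
      rw [Finset.mem_biUnion]
      refine ⟨i, Finset.mem_univ i, ?_⟩
      rw [Finset.mem_union]
      first
        | exact Or.inl (Finset.mem_image_of_mem _ hx)
        | exact Or.inr (Finset.mem_image_of_mem _ hx)
  set O : Finset (Option (Zd d)) := insert none (B.image some) with hO
  have hnone_mem : (none : Option (Zd d)) ∈ O := Finset.mem_insert_self _ _
  have hsome_mem : ∀ x : Zd d, x ∈ B → some x ∈ O := fun x hx =>
    Finset.mem_insert_of_mem (Finset.mem_image_of_mem _ hx)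
  -- step 1: the finsum is a finite sum over O ×ˢ O
  have hsupp : (Function.support fun p : Option (Zd d) × Option (Zd d) =>
      kap Γ t p.1 p.2 * |hatphi φ p.1 ^ 2 - hatphi φ p.2 ^ 2|) ⊆ ↑(O ×ˢ O) := by
    rintro ⟨p1, p2⟩ hp
    rw [Function.mem_support] at hp
    rw [Finset.mem_coe, Finset.mem_product]
    cases p1 with
    | none => cases p2 with
      | none => exfalso; apply hp; simp [kap]
      | some y =>
        refine ⟨hnone_mem, hsome_mem y (hFB ?_)⟩
        rw [hmemF]
        intro h0
        apply hp
        simp [kap, hatphi, h0]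
    | some x => cases p2 with
      | none =>
        refine ⟨hsome_mem x (hFB ?_), hnone_mem⟩
        rw [hmemF]
        intro h0
        apply hp
        simp [kap, hatphi, h0]
      | some y =>
        have hdist : dist1 x y = 1 := by
          by_contra hne
          apply hp
          simp [kap, hne]
        have hxy : φ x ≠ 0 ∨ φ y ≠ 0 := by
          by_contra hcon
          push_neg at hcon
          apply hp
          simp [hatphi, hcon.1, hcon.2]
        rcases hxy with hx | hy
        · have hxF : x ∈ F := (hmemF x).mpr hx
          refine ⟨hsome_mem x (hFB hxF), hsome_mem y ?_⟩
          obtain ⟨i, hi | hi⟩ := eq_add_or_sub_of_dist1 hdist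
          · rw [hi]; exact (hnbB x hxF i).1
          · rw [hi]; exact (hnbB x hxF i).2
        · have hyF : y ∈ F := (hmemF y).mpr hy
          refine ⟨hsome_mem x ?_, hsome_mem y (hFB hyF)⟩
          have hdist' : dist1 y x = 1 := by rw [dist1_symm]; exact hdist
          obtain ⟨i, hi | hi⟩ := eq_add_or_sub_of_dist1 hdist'
          · rw [hi]; exact (hnbB y hyF i).1
          · rw [hi]; exact (hnbB y hyF i).2
  rw [finsum_eq_finset_sum_of_support_subset _ hsupp]
  set S : ℝ := ∑ p ∈ O ×ˢ O, kap Γ t p.1 p.2 * |hatphi φ p.1 ^ 2 - hatphi φ p.2 ^ 2| with hS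
  -- step 2: split S
  have hsplit : S = (∑ x ∈ B, ∑ y ∈ B,
        (if dist1 x y = 1 then (1:ℝ) else 0) * |φ x ^ 2 - φ y ^ 2|)
      + 2 * (t * ∑ x ∈ B, chi Γ x * φ x ^ 2) := by
    have hnone_nmem : (none : Option (Zd d)) ∉ B.image some := by simp
    have hinj : ∀ x ∈ B, ∀ y ∈ B, (some x : Option (Zd d)) = some y → x = y :=
      fun x _ y _ h => Option.some_injective _ h
    rw [hS, Finset.sum_product, hO]
    simp only [Finset.sum_insert hnone_nmem, Finset.sum_image hinj]
    have e0 : kap Γ t none none * |hatphi φ none ^ 2 - hatphi φ none ^ 2| = 0 := by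
      simp [kap]
    have e1 : ∀ y : Zd d, kap Γ t none (some y) * |hatphi φ none ^ 2 - hatphi φ (some y) ^ 2|
        = t * (chi Γ y * φ y ^ 2) := by
      intro y
      show (t * chi Γ y) * |(0:ℝ) ^ 2 - φ y ^ 2| = _
      rw [show (0:ℝ) ^ 2 - φ y ^ 2 = -(φ y ^ 2) by ring, abs_neg, abs_of_nonneg (sq_nonneg _)]
      ring
    have e2 : ∀ x : Zd d, kap Γ t (some x) none * |hatphi φ (some x) ^ 2 - hatphi φ none ^ 2|
        = t * (chi Γ x * φ x ^ 2) := by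
      intro x
      show (t * chi Γ x) * |φ x ^ 2 - (0:ℝ) ^ 2| = _
      rw [show φ x ^ 2 - (0:ℝ) ^ 2 = φ x ^ 2 by ring, abs_of_nonneg (sq_nonneg _)]
      ring
    have e3 : ∀ x y : Zd d, kap Γ t (some x) (some y) * |hatphi φ (some x) ^ 2 - hatphi φ (some y) ^ 2|
        = (if dist1 x y = 1 then (1:ℝ) else 0) * |φ x ^ 2 - φ y ^ 2| := fun x y => rfl
    simp only [e0, e1, e2, e3]
    rw [Finset.sum_add_distrib, ← Finset.mul_sum]
    ring
  -- levels
  set vals : Finset ℝ := insert 0 (F.image fun x => φ x ^ 2) with hvals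
  have h0v : (0:ℝ) ∈ vals := Finset.mem_insert_self _ _
  have hval_mem : ∀ y : Zd d, φ y ^ 2 ∈ vals := by
    intro y
    by_cases hy : φ y = 0
    · simp [hvals, hy]
    · exact Finset.mem_insert_of_mem (Finset.mem_image_of_mem _ ((hmemF y).mpr hy))
  set w : ℝ → ℝ := fun s => s - predv vals s with hw
  set posvals := vals.filter (fun s => 0 < s) with hposvals
  have hwpos : ∀ s ∈ posvals, 0 < w s := by
    intro s hs
    rw [hposvals, Finset.mem_filter] at hs
    have := (predv_spec h0v hs.2).2.1
    simp only [hw]; linarith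
  have key : ∀ a b : ℝ, a ∈ vals → b ∈ vals → 0 ≤ b →
      ∑ s ∈ posvals.filter (fun s => b < s ∧ s ≤ a), w s = max (a - b) 0 := by
    intro a b ha hb hb0
    rcases le_or_gt b a with hba | hba
    · have hfe : posvals.filter (fun s => b < s ∧ s ≤ a) = vals.filter (fun s => b < s ∧ s ≤ a) := by
        rw [hposvals, Finset.filter_filter]
        apply Finset.filter_congr
        intro s _
        constructor
        · rintro ⟨_, h⟩; exact h
        · rintro ⟨h1, h2⟩; exact ⟨lt_of_le_of_lt hb0 h1, h1, h2⟩
      rw [hfe, telescope_aux vals h0v _ a b ha hb hb0 hba rfl, max_eq_left (by linarith)]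
    · have hfe : posvals.filter (fun s => b < s ∧ s ≤ a) = ∅ := by
        apply Finset.filter_false_of_mem
        rintro s _ ⟨h1, h2⟩
        linarith
      rw [hfe, max_eq_right (by linarith : a - b ≤ 0)]
      simp
  have indic_sum2 : ∀ a b : ℝ, a ∈ vals → b ∈ vals → 0 ≤ b →
      ∑ s ∈ posvals, (if s ≤ a ∧ ¬ s ≤ b then w s else 0) = max (a - b) 0 := by
    intro a b ha hb hb0
    have h1 : ∀ s ∈ posvals, (if s ≤ a ∧ ¬ s ≤ b then w s else 0)
        = (if b < s ∧ s ≤ a then w s else 0) := by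
      intro s _
      apply if_congr _ rfl rfl
      rw [not_le]
      exact and_comm
    rw [Finset.sum_congr rfl h1, ← Finset.sum_filter]
    exact key a b ha hb hb0
  have indic_sum : ∀ a : ℝ, a ∈ vals → 0 ≤ a →
      ∑ s ∈ posvals, (if s ≤ a then w s else 0) = a := by
    intro a ha ha0
    have h1 : ∀ s ∈ posvals, (if s ≤ a then w s else 0)
        = (if s ≤ a ∧ ¬ s ≤ (0:ℝ) then w s else 0) := by
      intro s hs
      rw [hposvals, Finset.mem_filter] at hs
      have hns : ¬ s ≤ (0:ℝ) := not_le.mpr hs.2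
      by_cases hsa : s ≤ a <;> simp [hsa, hns]
    rw [Finset.sum_congr rfl h1, indic_sum2 a 0 ha h0v le_rfl, max_eq_left (by linarith)]
    ring
  -- level sets
  set A : ℝ → Finset (Zd d) := fun s => F.filter (fun x => s ≤ φ x ^ 2) with hA
  have hmemA : ∀ s ∈ posvals, ∀ y : Zd d, (y ∈ A s ↔ s ≤ φ y ^ 2) := by
    intro s hs y
    rw [hposvals, Finset.mem_filter] at hs
    simp only [hA, Finset.mem_filter]
    constructor
    · rintro ⟨_, h⟩; exact h
    · intro h
      refine ⟨(hmemF y).mpr fun h0 => ?_, h⟩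
      rw [h0] at h; norm_num at h; linarith [hs.2]
  have hnorm2 : ∑ x ∈ F, φ x ^ 2 = 1 := by
    rw [← hnorm, norm2]
    symm
    apply finsum_eq_finset_sum_of_support_subset
    intro x hx
    simp only [Function.mem_support] at hx
    have hφx : φ x ≠ 0 := fun h => hx (by simp [h])
    exact (hmemF x).mpr hφx
  have hsum_card : ∑ s ∈ posvals, w s * ((A s).card : ℝ) = 1 := by
    have hc : ∀ s ∈ posvals, w s * ((A s).card : ℝ)
        = ∑ x ∈ F, (if s ≤ φ x ^ 2 then w s else 0) := by
      intro s _
      have hcard : ((A s).card : ℝ) = ∑ x ∈ F, (if s ≤ φ x ^ 2 then (1:ℝ) else 0) := by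
        rw [hA]
        rw [Finset.card_filter]
        push_cast
        rfl
      rw [hcard, Finset.mul_sum]
      exact Finset.sum_congr rfl fun x _ => by by_cases h : s ≤ φ x ^ 2 <;> simp [h]
    rw [Finset.sum_congr rfl hc, Finset.sum_comm, ← hnorm2]
    exact Finset.sum_congr rfl fun x hx => indic_sum _ (hval_mem x) (sq_nonneg _)
  set m : Zd d → Zd d → ℝ := fun x y => max (φ x ^ 2 - φ y ^ 2) 0 with hm
  set T1 : ℝ := ∑ x ∈ F, ∑ i : Fin d, (m x (x + unitVec i) + m x (x - unitVec i)) with hT1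
  set T2 : ℝ := ∑ x ∈ F.filter (· ∈ Γ), φ x ^ 2 with hT2
  have hE : ∑ s ∈ posvals, w s * qformT Γ t (A s) = T1 + t * T2 := by
    have hq : ∀ s ∈ posvals, w s * qformT Γ t (A s)
        = (∑ x ∈ F, ∑ i : Fin d,
            ((if s ≤ φ x ^ 2 ∧ ¬ s ≤ φ (x + unitVec i) ^ 2 then w s else 0)
             + (if s ≤ φ x ^ 2 ∧ ¬ s ≤ φ (x - unitVec i) ^ 2 then w s else 0)))
          + t * (∑ x ∈ F.filter (· ∈ Γ), (if s ≤ φ x ^ 2 then w s else 0)) := by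
      intro s hs
      rw [qformT, ncard_inter, mul_add]
      congr 1
      · -- edge part
        rw [qform_eq]
        rw [show A s = F.filter (fun x => s ≤ φ x ^ 2) from rfl,
          Finset.sum_filter, Finset.mul_sum]
        refine Finset.sum_congr rfl fun x _ => ?_
        by_cases hP : s ≤ φ x ^ 2
        · rw [if_pos hP, Finset.mul_sum]
          refine Finset.sum_congr rfl fun i _ => ?_
          rw [mul_add]
          congr 1
          · by_cases hQ : s ≤ φ (x + unitVec i) ^ 2
            · rw [if_pos ((hmemA s hs _).mpr hQ), if_neg (by simp [hP, hQ]), mul_zero]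
            · rw [if_neg (fun hmem => hQ ((hmemA s hs _).mp hmem)), if_pos ⟨hP, hQ⟩, mul_one]
          · by_cases hQ : s ≤ φ (x - unitVec i) ^ 2
            · rw [if_pos ((hmemA s hs _).mpr hQ), if_neg (by simp [hP, hQ]), mul_zero]
            · rw [if_neg (fun hmem => hQ ((hmemA s hs _).mp hmem)), if_pos ⟨hP, hQ⟩, mul_one]
        · rw [if_neg hP, mul_zero]
          symm
          apply Finset.sum_eq_zero
          intro i _
          rw [if_neg (by simp [hP]), if_neg (by simp [hP]), add_zero]
      · -- Γ part
        have hfil : (A s).filter (· ∈ Γ) = (F.filter (· ∈ Γ)).filter (fun x => s ≤ φ x ^ 2) := by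
          rw [show A s = F.filter (fun x => s ≤ φ x ^ 2) from rfl,
            Finset.filter_filter, Finset.filter_filter]
          apply Finset.filter_congr
          intro x _
          exact and_comm
        have hws : (∑ x ∈ F.filter (· ∈ Γ), if s ≤ φ x ^ 2 then w s else 0)
            = w s * ∑ x ∈ F.filter (· ∈ Γ), (if s ≤ φ x ^ 2 then (1:ℝ) else 0) := by
          rw [Finset.mul_sum]
          exact Finset.sum_congr rfl fun x _ => by by_cases h : s ≤ φ x ^ 2 <;> simp [h]
        rw [hws, hfil, Finset.card_filter]
        push_cast
        ring
    rw [Finset.sum_congr rfl hq, Finset.sum_add_distrib]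
    congr 1
    · -- edge part equals T1
      rw [Finset.sum_comm, hT1]
      refine Finset.sum_congr rfl fun x hx => ?_
      rw [Finset.sum_comm]
      refine Finset.sum_congr rfl fun i _ => ?_
      rw [Finset.sum_add_distrib,
        indic_sum2 _ _ (hval_mem x) (hval_mem (x + unitVec i)) (sq_nonneg _),
        indic_sum2 _ _ (hval_mem x) (hval_mem (x - unitVec i)) (sq_nonneg _)]
    · -- Γ part equals t * T2
      rw [← Finset.mul_sum, Finset.sum_comm, hT2]
      congr 1
      refine Finset.sum_congr rfl fun x hx => ?_
      have hxF : x ∈ F := Finset.mem_of_mem_filter x hx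
      exact indic_sum _ (hval_mem x) (sq_nonneg _)
  have hSbound : 2 * (T1 + t * T2) ≤ S := by
    rw [hsplit]
    have hSB : t * T2 ≤ t * ∑ x ∈ B, chi Γ x * φ x ^ 2 := by
      apply mul_le_mul_of_nonneg_left _ ht
      rw [hT2]
      have hsub : F.filter (· ∈ Γ) ⊆ B := subset_trans (Finset.filter_subset _ _) hFB
      calc ∑ x ∈ F.filter (· ∈ Γ), φ x ^ 2
          = ∑ x ∈ F.filter (· ∈ Γ), chi Γ x * φ x ^ 2 := by
            refine Finset.sum_congr rfl fun x hx => ?_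
            rw [Finset.mem_filter] at hx
            rw [chi_apply, if_pos hx.2, one_mul]
        _ ≤ ∑ x ∈ B, chi Γ x * φ x ^ 2 := Finset.sum_le_sum_of_subset_of_nonneg hsub
            (fun x _ _ => mul_nonneg (chi_nonneg Γ x) (sq_nonneg _))
    have hmnn : ∀ x y : Zd d, 0 ≤ m x y := fun x y => le_max_right _ _
    have hSS : 2 * T1 ≤ ∑ x ∈ B, ∑ y ∈ B,
        (if dist1 x y = 1 then (1:ℝ) else 0) * |φ x ^ 2 - φ y ^ 2| := by
      have habs : ∀ x y : Zd d, (if dist1 x y = 1 then (1:ℝ) else 0) * |φ x ^ 2 - φ y ^ 2|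
          = (if dist1 x y = 1 then (1:ℝ) else 0) * m x y
            + (if dist1 x y = 1 then (1:ℝ) else 0) * m y x := by
        intro x y
        rw [← mul_add]
        congr 1
        rw [hm]
        exact abs_eq_max_add_max _ _
      have hsplit2 : ∑ x ∈ B, ∑ y ∈ B, (if dist1 x y = 1 then (1:ℝ) else 0) * |φ x ^ 2 - φ y ^ 2|
          = 2 * ∑ x ∈ B, ∑ y ∈ B, (if dist1 x y = 1 then (1:ℝ) else 0) * m x y := by
        simp only [habs]
        simp only [Finset.sum_add_distrib]
        have hswap : ∑ x ∈ B, ∑ y ∈ B, (if dist1 x y = 1 then (1:ℝ) else 0) * m y x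
            = ∑ x ∈ B, ∑ y ∈ B, (if dist1 x y = 1 then (1:ℝ) else 0) * m x y := by
          rw [Finset.sum_comm]
          exact Finset.sum_congr rfl fun x _ => Finset.sum_congr rfl fun y _ => by
            rw [dist1_symm]
        rw [hswap]
        ring
      have h3 : T1 ≤ ∑ x ∈ B, ∑ y ∈ B, (if dist1 x y = 1 then (1:ℝ) else 0) * m x y := by
        rw [hT1]
        have hinner : ∀ x ∈ F, (∑ i : Fin d, (m x (x + unitVec i) + m x (x - unitVec i)))
            ≤ ∑ y ∈ B, (if dist1 x y = 1 then (1:ℝ) else 0) * m x y := by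
          intro x hx
          set Nx : Finset (Zd d) := (Finset.univ.image fun i : Fin d => x + unitVec i)
            ∪ (Finset.univ.image fun i : Fin d => x - unitVec i) with hNx
          have hNxB : Nx ⊆ B := by
            intro y hy
            rw [hNx, Finset.mem_union] at hy
            rcases hy with hy | hy <;> obtain ⟨i, _, rfl⟩ := Finset.mem_image.mp hy
            · exact (hnbB x hx i).1
            · exact (hnbB x hx i).2
          have hdisj : Disjoint (Finset.univ.image fun i : Fin d => x + unitVec i)
              (Finset.univ.image fun i : Fin d => x - unitVec i) := by
            rw [Finset.disjoint_left]
            intro y hy1 hy2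
            obtain ⟨i, _, rfl⟩ := Finset.mem_image.mp hy1
            obtain ⟨j, _, hji⟩ := Finset.mem_image.mp hy2
            exact add_unitVec_ne_sub x i j hji.symm
          have hsum_eq : ∑ i : Fin d, (m x (x + unitVec i) + m x (x - unitVec i))
              = ∑ y ∈ Nx, m x y := by
            rw [hNx, Finset.sum_union hdisj, Finset.sum_add_distrib]
            congr 1
            · rw [Finset.sum_image fun i _ j _ h => add_unitVec_inj x h]
            · rw [Finset.sum_image fun i _ j _ h => sub_unitVec_inj x h]
          have hdist_on : ∀ y ∈ Nx, m x y = (if dist1 x y = 1 then (1:ℝ) else 0) * m x y := by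
            intro y hy
            rw [hNx, Finset.mem_union] at hy
            rcases hy with hy | hy <;> obtain ⟨i, _, rfl⟩ := Finset.mem_image.mp hy
            · rw [if_pos (dist1_self_add x i), one_mul]
            · rw [if_pos (dist1_self_sub x i), one_mul]
          rw [hsum_eq, Finset.sum_congr rfl hdist_on]
          apply Finset.sum_le_sum_of_subset_of_nonneg hNxB
          intro y _ _
          exact mul_nonneg (by split <;> norm_num) (hmnn x y)
        calc ∑ x ∈ F, ∑ i : Fin d, (m x (x + unitVec i) + m x (x - unitVec i))
            ≤ ∑ x ∈ F, ∑ y ∈ B, (if dist1 x y = 1 then (1:ℝ) else 0) * m x y :=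
              Finset.sum_le_sum hinner
          _ ≤ ∑ x ∈ B, ∑ y ∈ B, (if dist1 x y = 1 then (1:ℝ) else 0) * m x y :=
              Finset.sum_le_sum_of_subset_of_nonneg hFB fun x _ _ =>
                Finset.sum_nonneg fun y _ =>
                  mul_nonneg (by split <;> norm_num) (hmnn x y)
      rw [hsplit2]
      linarith
    linarith
  -- step final: existence of a good level set
  have hpos_ne : posvals.Nonempty := by
    obtain ⟨x, hx⟩ : F.Nonempty := by
      by_contra h
      rw [Finset.not_nonempty_iff_eq_empty] at h
      rw [h] at hnorm2; simp at hnorm2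
    refine ⟨φ x ^ 2, ?_⟩
    rw [hposvals, Finset.mem_filter]
    have : φ x ≠ 0 := (hmemF x).mp hx
    exact ⟨hval_mem x, by positivity⟩
  have hexists : ∃ s ∈ posvals, qformT Γ t (A s) ≤ S / 2 * ((A s).card : ℝ) := by
    by_contra hc
    push_neg at hc
    have hlt : ∑ s ∈ posvals, w s * (S / 2 * ((A s).card : ℝ))
        < ∑ s ∈ posvals, w s * qformT Γ t (A s) :=
      Finset.sum_lt_sum_of_nonempty hpos_ne fun s hs =>
        mul_lt_mul_of_pos_left (hc s hs) (hwpos s hs)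
    have heq : ∑ s ∈ posvals, w s * (S / 2 * ((A s).card : ℝ)) = S / 2 := by
      have : ∀ s ∈ posvals, w s * (S / 2 * ((A s).card : ℝ))
          = S / 2 * (w s * ((A s).card : ℝ)) := fun s _ => by ring
      rw [Finset.sum_congr rfl this, ← Finset.mul_sum, hsum_card, mul_one]
    rw [heq, hE] at hlt
    linarith
  obtain ⟨s, hs, hsle⟩ := hexists
  have hAne : (A s).Nonempty := by
    rw [hposvals, Finset.mem_filter] at hs
    obtain ⟨hsv, hs0⟩ := hs
    rw [hvals] at hsv
    rcases Finset.mem_insert.mp hsv with h | h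
    · exfalso; rw [← h] at hs0; exact lt_irrefl _ hs0
    · obtain ⟨x, hxF, hxs⟩ := Finset.mem_image.mp h
      exact ⟨x, by rw [hA]; exact Finset.mem_filter.mpr ⟨hxF, le_of_eq hxs.symm⟩⟩
  have hcard_pos : (0:ℝ) < ((A s).card : ℝ) := by
    have := Finset.card_pos.mpr hAne
    exact_mod_cast this
  have hbeta : betaT Γ t ≤ qformT Γ t (A s) / ((A s).card : ℝ) := betaT_le Γ ht (A s) hAne
  have hdiv : qformT Γ t (A s) / ((A s).card : ℝ) ≤ S / 2 := by
    rw [div_le_iff₀ hcard_pos]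
    exact hsle
  linarith
end
end

section
/- Let H = -Δ + V with V bounded, Γ ⊊ Z^d, and assume E_∅(H) = 0 and E_Γ := E_Γ(H) > 0. Then for every η ∈ (0, E_Γ) and t > 0 with t - η - (η/(E_Γ - η))(4d + spr(V)) > 0, one has E_Γ(H,t) ≥ η. Consequently E_Γ(H,t) ≥ E_Γ t / (t + 4d + E_Γ + spr(V)) for all t > 0. -/
open scoped BigOperators

noncomputable section

/-!
Write `φ = φ₁ + φ₂` with `φ₁ = χ_Γ φ`, `φ₂ = χ_{Γᶜ} φ`, and let `a = ‖φ₁‖²`, `b = ‖φ₂‖²`,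
`qᵢ = ⟨φᵢ, Hφᵢ⟩`, `B = ⟨φ₁, Hφ₂⟩ + ⟨φ₂, Hφ₁⟩`. Since `H ≥ E_∅(H) = 0`, the polynomial
`s ↦ ⟨φ₁ + sφ₂, H(φ₁ + sφ₂)⟩ = q₁ + sB + s²q₂` is nonnegative, so `B² ≤ 4q₁q₂`; this is the
variational form of the Schur complement bound `S_ν⁻¹ ≤ 1/ν`. Moreover `q₂ ≥ E_Γ b`, and
`q₁ ≤ (4d + sup V) a ≤ (4d + spr V) a` because `inf V ≤ E_∅(H) = 0`. Weighted AM–GM with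
`c = E_Γ/(E_Γ - η)` gives `B ≥ -(c q₁ + q₂/c)`, hence, for normalized `φ`,
`⟨φ, (H + tχ_Γ)φ⟩ = q₁ + B + q₂ + ta ≥ (η/E_Γ) q₂ - (η/(E_Γ - η)) q₁ + ta ≥ ηb + ηa = η`.
The second claim is the first one at `η = E_Γ t/(t + 4d + E_Γ + spr V)`.
-/

open Function

@[fun_prop]
theorem Function.HasFiniteSupport.indicator {α M : Type*} [Zero M] {f : α → M}
    (hf : HasFiniteSupport f) (A : Set α) : HasFiniteSupport (A.indicator f) := by
  rw [HasFiniteSupport, Set.support_indicator]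
  exact hf.subset Set.inter_subset_right

section Shift

variable {G : Type*} [AddCommGroup G] {φ : G → ℝ}

theorem finsum_mul_secondDiff_eq_finsum_sq (hf : HasFiniteSupport φ) (e : G) :
    ∑ᶠ x, φ x * ((φ x - φ (x + e)) + (φ x - φ (x - e))) = ∑ᶠ x, (φ x - φ (x + e)) ^ 2 := by
  have hshift : ∑ᶠ x, φ x * (φ x - φ (x - e)) = ∑ᶠ x, φ (x + e) * (φ (x + e) - φ x) := by
    simpa using
      (finsum_comp_equiv (Equiv.addRight e) (f := fun x => φ x * (φ x - φ (x - e)))).symm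
  simp_rw [mul_add]
  rw [finsum_add_distrib (by fun_prop) (by fun_prop), hshift,
    ← finsum_add_distrib (by fun_prop) (by fun_prop (disch := exact add_left_injective e))]
  exact finsum_congr fun x => by ring

theorem finsum_sq_sub_shift_le (hf : HasFiniteSupport φ) (e : G) :
    ∑ᶠ x, (φ x - φ (x + e)) ^ 2 ≤ 4 * ∑ᶠ x, φ x ^ 2 := by
  have hshift : ∑ᶠ x, φ (x + e) ^ 2 = ∑ᶠ x, φ x ^ 2 :=
    finsum_comp_equiv (Equiv.addRight e) (f := fun x => φ x ^ 2)
  calc ∑ᶠ x, (φ x - φ (x + e)) ^ 2 ≤ ∑ᶠ x, (2 * φ x ^ 2 + 2 * φ (x + e) ^ 2) :=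
        finsum_le_finsum' (by fun_prop (disch := first | simp | exact add_left_injective e))
          (by fun_prop (disch := first | simp | exact add_left_injective e))
          fun x => by nlinarith [sq_nonneg (φ x + φ (x + e))]
    _ = 4 * ∑ᶠ x, φ x ^ 2 := by
        rw [finsum_add_distrib (by fun_prop (disch := simp))
            (by fun_prop (disch := first | simp | exact add_left_injective e)),
          ← mul_finsum, ← mul_finsum, hshift]
        ring

end Shift

section Energy

variable {d : ℕ} {V φ f g : Zd d → ℝ}

theorem finsum_mul_negLap (hf : HasFiniteSupport φ) :
    ∑ᶠ x, φ x * negLap φ x = ∑ i, ∑ᶠ x, (φ x - φ (x + unitVec i)) ^ 2 := by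
  simp_rw [negLap, Finset.mul_sum]
  rw [finsum_sum_comm _ _ fun i _ => by fun_prop]
  exact Finset.sum_congr rfl fun i _ => finsum_mul_secondDiff_eq_finsum_sq hf _

theorem finsum_mul_negLap_nonneg (hf : HasFiniteSupport φ) : 0 ≤ ∑ᶠ x, φ x * negLap φ x := by
  rw [finsum_mul_negLap hf]
  exact Finset.sum_nonneg fun i _ => finsum_nonneg fun x => sq_nonneg _

theorem finsum_mul_negLap_le (hf : HasFiniteSupport φ) :
    ∑ᶠ x, φ x * negLap φ x ≤ 4 * d * norm2 φ := by
  rw [finsum_mul_negLap hf]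
  calc ∑ i, ∑ᶠ x, (φ x - φ (x + unitVec i)) ^ 2 ≤ ∑ _i : Fin d, 4 * norm2 φ :=
        Finset.sum_le_sum fun i _ => finsum_sq_sub_shift_le hf _
    _ = 4 * d * norm2 φ := by
        rw [Finset.sum_const, Finset.card_univ, Fintype.card_fin, nsmul_eq_mul]; ring

theorem energy_eq_finsum_mul_negLap_add (V : Zd d → ℝ) (hf : HasFiniteSupport φ) :
    energy V φ = ∑ᶠ x, φ x * negLap φ x + ∑ᶠ x, V x * φ x ^ 2 := by
  rw [energy, ← finsum_add_distrib (by fun_prop) (by fun_prop (disch := simp))]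
  exact finsum_congr fun x => by ring

theorem finsum_mul_sq_le_of_le {c : ℝ} (hV : ∀ x, V x ≤ c) (hf : HasFiniteSupport φ) :
    ∑ᶠ x, V x * φ x ^ 2 ≤ c * norm2 φ := by
  rw [norm2, mul_finsum]
  exact finsum_le_finsum' (by fun_prop (disch := simp)) (by fun_prop (disch := simp))
    fun x => mul_le_mul_of_nonneg_right (hV x) (sq_nonneg _)

theorem le_finsum_mul_sq_of_le {c : ℝ} (hV : ∀ x, c ≤ V x) (hf : HasFiniteSupport φ) :
    c * norm2 φ ≤ ∑ᶠ x, V x * φ x ^ 2 := by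
  rw [norm2, mul_finsum]
  exact finsum_le_finsum' (by fun_prop (disch := simp)) (by fun_prop (disch := simp))
    fun x => mul_le_mul_of_nonneg_right (hV x) (sq_nonneg _)

theorem BddPot.bddAbove (hV : BddPot V) : BddAbove (Set.range V) := by
  obtain ⟨C, hC⟩ := hV
  exact ⟨C, by rintro _ ⟨x, rfl⟩; exact (abs_le.1 (hC x)).2⟩

theorem BddPot.bddBelow (hV : BddPot V) : BddBelow (Set.range V) := by
  obtain ⟨C, hC⟩ := hV
  exact ⟨-C, by rintro _ ⟨x, rfl⟩; exact (abs_le.1 (hC x)).1⟩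

theorem spr_nonneg (hV : BddPot V) : 0 ≤ spr V :=
  sub_nonneg.2 (csInf_le_csSup (Set.range_nonempty V) hV.bddBelow hV.bddAbove)

theorem energy_le_of_bddPot (hV : BddPot V) (hf : HasFiniteSupport φ) :
    energy V φ ≤ (4 * d + sSup (Set.range V)) * norm2 φ := by
  rw [energy_eq_finsum_mul_negLap_add V hf, add_mul]
  exact add_le_add (finsum_mul_negLap_le hf)
    (finsum_mul_sq_le_of_le (fun x => le_csSup hV.bddAbove ⟨x, rfl⟩) hf)

theorem le_energy_of_bddPot (hV : BddPot V) (hf : HasFiniteSupport φ) :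
    sInf (Set.range V) * norm2 φ ≤ energy V φ := by
  rw [energy_eq_finsum_mul_negLap_add V hf]
  linarith [finsum_mul_negLap_nonneg hf,
    le_finsum_mul_sq_of_le (fun x => csInf_le hV.bddBelow ⟨x, rfl⟩) hf]

theorem negLap_add (f g : Zd d → ℝ) (x : Zd d) : negLap (f + g) x = negLap f x + negLap g x := by
  simp only [negLap, Pi.add_apply, ← Finset.sum_add_distrib]
  exact Finset.sum_congr rfl fun i _ => by ring

theorem negLap_smul (c : ℝ) (f : Zd d → ℝ) (x : Zd d) : negLap (c • f) x = c * negLap f x := by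
  simp only [negLap, Pi.smul_apply, smul_eq_mul, Finset.mul_sum]
  exact Finset.sum_congr rfl fun i _ => by ring

theorem norm2_nonneg (φ : Zd d → ℝ) : 0 ≤ norm2 φ :=
  finsum_nonneg fun _ => sq_nonneg _

theorem norm2_smul (c : ℝ) (φ : Zd d → ℝ) : norm2 (c • φ) = c ^ 2 * norm2 φ := by
  rw [norm2, norm2, mul_finsum]
  exact finsum_congr fun x => by simp only [Pi.smul_apply, smul_eq_mul]; ring

theorem energy_smul (V : Zd d → ℝ) (c : ℝ) (φ : Zd d → ℝ) :
    energy V (c • φ) = c ^ 2 * energy V φ := by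
  rw [energy, energy, mul_finsum]
  exact finsum_congr fun x => by simp only [negLap_smul, Pi.smul_apply, smul_eq_mul]; ring

theorem eq_zero_of_norm2_eq_zero (hf : HasFiniteSupport φ) (h : norm2 φ = 0) : φ = 0 := by
  by_contra hne
  obtain ⟨x, hx⟩ := Function.ne_iff.1 hne
  have : 0 < norm2 φ :=
    finsum_pos (fun y => sq_nonneg (φ y)) ⟨x, sq_pos_of_ne_zero hx⟩ (by fun_prop (disch := simp))
  exact this.ne' h

theorem mul_norm2_le_energy_of_normalized {c : ℝ} (hf : HasFiniteSupport φ)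
    (h : ∀ r : ℝ, norm2 (r • φ) = 1 → c ≤ energy V (r • φ)) : c * norm2 φ ≤ energy V φ := by
  rcases (norm2_nonneg φ).eq_or_lt with h0 | hpos
  · rw [← h0, eq_zero_of_norm2_eq_zero hf h0.symm]
    simp [energy]
  · have hsq : (√(norm2 φ))⁻¹ ^ 2 = (norm2 φ)⁻¹ := by rw [inv_pow, Real.sq_sqrt hpos.le]
    have hc := h (√(norm2 φ))⁻¹ (by rw [norm2_smul, hsq, inv_mul_cancel₀ hpos.ne'])
    rw [energy_smul, hsq, le_inv_mul_iff₀ hpos] at hc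
    linarith

theorem E0_mul_norm2_le_energy (hV : BddPot V) (hf : HasFiniteSupport φ) :
    E0 V * norm2 φ ≤ energy V φ := by
  refine mul_norm2_le_energy_of_normalized hf fun r hr =>
    csInf_le ?_ ⟨r • φ, show HasFiniteSupport (r • φ) by fun_prop, hr, rfl⟩
  refine ⟨sInf (Set.range V), ?_⟩
  rintro _ ⟨ψ, hψ, hn, rfl⟩
  simpa [hn] using le_energy_of_bddPot hV hψ

theorem EG_mul_norm2_le_energy (hV : BddPot V) {Γ : Set (Zd d)} (hf : HasFiniteSupport φ)
    (hΓ : ∀ x ∈ Γ, φ x = 0) : EG V Γ * norm2 φ ≤ energy V φ := by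
  refine mul_norm2_le_energy_of_normalized hf fun r hr =>
    csInf_le ?_ ⟨r • φ, show HasFiniteSupport (r • φ) by fun_prop,
      fun x hx => by simp [hΓ x hx], hr, rfl⟩
  refine ⟨sInf (Set.range V), ?_⟩
  rintro _ ⟨ψ, hψ, -, hn, rfl⟩
  simpa [hn] using le_energy_of_bddPot hV hψ

theorem le_E0 {c : ℝ} (h : ∀ φ, HasFiniteSupport φ → norm2 φ = 1 → c ≤ energy V φ) :
    c ≤ E0 V := by
  classical
  have hδ : norm2 (Pi.single (0 : Zd d) (1 : ℝ)) = 1 := by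
    rw [norm2, finsum_eq_single _ 0 fun x hx => by simp [hx]]
    simp
  refine le_csInf ⟨_, _, (Set.finite_singleton 0).subset Pi.support_single_subset, hδ, rfl⟩ ?_
  rintro _ ⟨φ, hf, hn, rfl⟩
  exact h φ hf hn

theorem sInf_range_nonpos (hV : BddPot V) (hE0 : E0 V = 0) : sInf (Set.range V) ≤ 0 :=
  hE0 ▸ le_E0 fun _ hf hn => by simpa [hn] using le_energy_of_bddPot hV hf

def crossEnergy (V f g : Zd d → ℝ) : ℝ :=
  ∑ᶠ x, (f x * (negLap g x + V x * g x) + g x * (negLap f x + V x * f x))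

theorem energy_add_smul (V : Zd d → ℝ) (hf : HasFiniteSupport f) (hg : HasFiniteSupport g)
    (s : ℝ) : energy V (f + s • g) = energy V f + s * crossEnergy V f g + s ^ 2 * energy V g := by
  rw [energy, energy, energy, crossEnergy, mul_finsum, mul_finsum,
    ← finsum_add_distrib (by fun_prop) (by fun_prop),
    ← finsum_add_distrib (by fun_prop) (by fun_prop)]
  refine finsum_congr fun x => ?_
  simp only [negLap_add, negLap_smul, Pi.add_apply, Pi.smul_apply, smul_eq_mul]
  ring

theorem crossEnergy_sq_le (hpos : ∀ ψ, HasFiniteSupport ψ → 0 ≤ energy V ψ)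
    (hf : HasFiniteSupport f) (hg : HasFiniteSupport g) :
    crossEnergy V f g ^ 2 ≤ 4 * energy V f * energy V g := by
  have h := discrim_le_zero (a := energy V g) (b := crossEnergy V f g) (c := energy V f)
    fun s => by
      have := hpos (f + s • g) (by fun_prop)
      rw [energy_add_smul V hf hg, sq] at this
      linarith
  rw [discrim] at h
  linarith

theorem energy_add_mul_chi (V : Zd d → ℝ) (Γ : Set (Zd d)) (t : ℝ) (hf : HasFiniteSupport φ) :
    energy (fun x => V x + t * chi Γ x) φ = energy V φ + t * norm2 (Γ.indicator φ) := by
  rw [energy, energy, norm2, mul_finsum,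
    ← finsum_add_distrib (by fun_prop) (by fun_prop (disch := simp))]
  refine finsum_congr fun x => ?_
  by_cases hx : x ∈ Γ
  · simp only [chi, hx, Set.indicator_of_mem, mul_one]; ring
  · simp [chi, hx]

theorem norm2_indicator_add_compl (Γ : Set (Zd d)) (hf : HasFiniteSupport φ) :
    norm2 (Γ.indicator φ) + norm2 (Γᶜ.indicator φ) = norm2 φ := by
  rw [norm2, norm2, norm2,
    ← finsum_add_distrib (by fun_prop (disch := simp)) (by fun_prop (disch := simp))]
  refine finsum_congr fun x => ?_
  by_cases hx : x ∈ Γ <;> simp [hx]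

end Energy

theorem neg_le_of_sq_le_four_mul {B p q c : ℝ} (hp : 0 ≤ p) (hq : 0 ≤ q) (hc : 0 < c)
    (hB : B ^ 2 ≤ 4 * p * q) : -(c * p + q / c) ≤ B := by
  refine (abs_le_of_sq_le_sq' (hB.trans ?_) (by positivity)).1
  have hsq : (c * p + q / c) ^ 2 = (c * p - q / c) ^ 2 + 4 * p * q := by
    field_simp
    ring
  nlinarith [sq_nonneg (c * p - q / c)]

theorem mul_add_le_of_split_bounds {M E η t a b q₁ q₂ B : ℝ} (hη : 0 < η) (hηE : η < E)
    (ha : 0 ≤ a) (hb : 0 ≤ b) (hq₁ : 0 ≤ q₁) (hq₁a : q₁ ≤ M * a) (hq₂b : E * b ≤ q₂)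
    (hB : B ^ 2 ≤ 4 * q₁ * q₂) (ht : 0 < t - η - η / (E - η) * M) :
    η * (a + b) ≤ q₁ + B + q₂ + t * a := by
  have hEη : 0 < E - η := sub_pos.2 hηE
  have hE : 0 < E := hη.trans hηE
  have hB' := neg_le_of_sq_le_four_mul hq₁ (hq₂b.trans' (by positivity)) (div_pos hE hEη) hB
  have hc : E / (E - η) = 1 + η / (E - η) := by field_simp; ring
  have hc' : q₂ / (E / (E - η)) = q₂ - η / E * q₂ := by field_simp
  have h₁ : η / (E - η) * q₁ ≤ η / (E - η) * (M * a) := by gcongr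
  have h₂ : η * b ≤ η / E * q₂ := by
    calc η * b = η / E * (E * b) := by field_simp
      _ ≤ η / E * q₂ := by gcongr
  have h₃ : (η + η / (E - η) * M) * a ≤ t * a := by gcongr; linarith
  rw [hc', hc] at hB'
  linarith

theorem mul_div_add_add_admissible {M E t : ℝ} (hM : 0 ≤ M) (hE : 0 < E) (ht : 0 < t) :
    0 < E * t / (t + M + E) ∧ E * t / (t + M + E) < E ∧
      0 < t - E * t / (t + M + E) - E * t / (t + M + E) / (E - E * t / (t + M + E)) * M := by
  have hD : 0 < t + M + E := by linarith
  refine ⟨by positivity, by rw [div_lt_iff₀ hD]; nlinarith, ?_⟩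
  have hsub : E - E * t / (t + M + E) = E * (M + E) / (t + M + E) := by field_simp; ring
  have key : t - E * t / (t + M + E) - E * t / (t + M + E) / (E - E * t / (t + M + E)) * M
      = E * t * t / ((t + M + E) * (M + E)) := by
    rw [hsub]
    field_simp
    ring
  rw [key]
  positivity

theorem le_energy_add_mul_chi {d : ℕ} {V φ : Zd d → ℝ} {Γ : Set (Zd d)} {η t : ℝ}
    (hV : BddPot V) (hE0 : E0 V = 0) (hη : 0 < η) (hηE : η < EG V Γ)
    (ht : 0 < t - η - η / (EG V Γ - η) * (4 * d + spr V))
    (hf : HasFiniteSupport φ) (hn : norm2 φ = 1) :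
    η ≤ energy (fun x => V x + t * chi Γ x) φ := by
  have hpos : ∀ ψ, HasFiniteSupport ψ → 0 ≤ energy V ψ := fun ψ hψ => by
    simpa [hE0] using E0_mul_norm2_le_energy hV hψ
  set φ₁ := Γ.indicator φ
  set φ₂ := Γᶜ.indicator φ
  have hf₁ : HasFiniteSupport φ₁ := hf.indicator Γ
  have hf₂ : HasFiniteSupport φ₂ := hf.indicator Γᶜ
  have hsplit : energy (fun x => V x + t * chi Γ x) φ
      = energy V φ₁ + crossEnergy V φ₁ φ₂ + energy V φ₂ + t * norm2 φ₁ := by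
    have h := energy_add_smul V hf₁ hf₂ 1
    rw [one_smul, Set.indicator_self_add_compl, one_mul, one_pow, one_mul] at h
    rw [energy_add_mul_chi V Γ t hf, h]
  have hq₁ : energy V φ₁ ≤ (4 * d + spr V) * norm2 φ₁ := by
    refine (energy_le_of_bddPot hV hf₁).trans (mul_le_mul_of_nonneg_right ?_ (norm2_nonneg _))
    rw [spr]
    linarith [sInf_range_nonpos hV hE0]
  have hq₂ : EG V Γ * norm2 φ₂ ≤ energy V φ₂ :=
    EG_mul_norm2_le_energy hV hf₂ fun x hx => Set.indicator_of_notMem (by simpa) _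
  have h := mul_add_le_of_split_bounds hη hηE (norm2_nonneg φ₁) (norm2_nonneg φ₂) (hpos φ₁ hf₁)
    hq₁ hq₂ (crossEnergy_sq_le hpos hf₁ hf₂) ht
  rwa [norm2_indicator_add_compl Γ hf, hn, mul_one, ← hsplit] at h

theorem le_EGt {d : ℕ} {V : Zd d → ℝ} {Γ : Set (Zd d)} {η t : ℝ} (hV : BddPot V)
    (hE0 : E0 V = 0) (hη : 0 < η) (hηE : η < EG V Γ)
    (ht : 0 < t - η - η / (EG V Γ - η) * (4 * d + spr V)) : η ≤ EGt V Γ t :=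
  le_E0 fun _ hf hn => le_energy_add_mul_chi hV hE0 hη hηE ht hf hn

theorem stmt18_general (d : ℕ) (V : Zd d → ℝ) (hV : BddPot V)
    (Γ : Set (Zd d))
    (hE0 : E0 V = 0) (hEG : 0 < EG V Γ) :
    (∀ η : ℝ, 0 < η → η < EG V Γ → ∀ t : ℝ, 0 < t →
      0 < t - η - η / (EG V Γ - η) * (4 * d + spr V) → η ≤ EGt V Γ t) ∧
    ∀ t : ℝ, 0 < t → EG V Γ * t / (t + 4 * d + EG V Γ + spr V) ≤ EGt V Γ t := by
  refine ⟨fun η hη hηE t _ ht => le_EGt hV hE0 hη hηE ht, fun t ht => ?_⟩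
  have hM : 0 ≤ 4 * (d : ℝ) + spr V := by have := spr_nonneg hV; positivity
  obtain ⟨hη, hηE, hcond⟩ := mul_div_add_add_admissible hM hEG ht
  rw [show t + 4 * d + EG V Γ + spr V = t + (4 * d + spr V) + EG V Γ by ring]
  exact le_EGt hV hE0 hη hηE hcond

/-- Schur complement estimate: if `E_∅(H) = 0` and `E_Γ = E_Γ(H) > 0`,
then `E_Γ(H,t) ≥ η` whenever `0 < η < E_Γ` and `t - η - (η/(E_Γ-η))(4d + spr V) > 0`;
consequently `E_Γ(H,t) ≥ E_Γ t/(t + 4d + E_Γ + spr V)` for all `t > 0`. -/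
theorem stmt18 (d : ℕ) (hd : 0 < d) (V : Zd d → ℝ) (hV : BddPot V)
    (Γ : Set (Zd d)) (hne : Γ ≠ Set.univ)
    (hE0 : E0 V = 0) (hEG : 0 < EG V Γ) :
    (∀ η : ℝ, 0 < η → η < EG V Γ → ∀ t : ℝ, 0 < t →
      0 < t - η - η / (EG V Γ - η) * (4 * d + spr V) → η ≤ EGt V Γ t) ∧
    ∀ t : ℝ, 0 < t → EG V Γ * t / (t + 4 * d + EG V Γ + spr V) ≤ EGt V Γ t :=
  stmt18_general d V hV Γ hE0 hEG
end
end
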